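/- arXiv:1601.06570 — 14 statements merged into one kernel-verified Lean document; each statement's English description precedes it below -/
import Mathlib

section
/- Let n ≥ 1 be a natural number. Let ϖ⁽¹⁾,…,ϖ⁽ⁿ⁾ : ℝⁿ → ℝ be continuously differentiable functions that are 2-homogeneous, i.e. ϖ⁽ⁱ⁾(t·x) = t²·ϖ⁽ⁱ⁾(x) for all t ∈ ℝ and x ∈ ℝⁿ. Let u : ℝⁿ → ℝ be twice continuously differentiable and satisfy Σ_{i=1}^{n} (∂u/∂x_i)(x)·(ϖ⁽ⁱ⁾(x) − x_i) = −u(x) for all x ∈ ℝⁿ. Define 𝒰(x) = Σ_{i=1}^{n} x_i·(∂u/∂x_i)(x) − u(x). Then Σ_{i=1}^{n} (∂𝒰/∂x_i)(x)·(ϖ⁽ⁱ⁾(x) − x_i) = −2·𝒰(x) for all x ∈ ℝⁿ. -/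
open scoped BigOperators

/-!
Write `W = (ϖ⁽¹⁾, …, ϖ⁽ⁿ⁾)`, so the equation reads `Du(x)(W x − x) = −u(x)` and
`𝒰(x) = Du(x) x − u(x)`. Then `D𝒰(x) h = D²u(x)(h, x)`. Differentiating the equation for `u` in the
direction `x` and using Euler's identity `DW(x) x = 2 W(x)` gives
`D²u(x)(x, W x − x) = −2 Du(x)(W x) = −2 𝒰(x)`, and the symmetry of `D²u(x)` closes the argument.
-/

theorem sum_map_single_mul {ι R F : Type*} [Fintype ι] [DecidableEq ι] [CommSemiring R]
    [FunLike F (ι → R) R] [LinearMapClass F R (ι → R) R] (L : F) (v : ι → R) :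
    ∑ i, L (Pi.single i 1) * v i = L v := by
  conv_rhs => rw [← Finset.univ_sum_single v, map_sum]
  refine Finset.sum_congr rfl fun i _ => ?_
  rw [mul_comm, ← smul_eq_mul, ← map_smul, ← Pi.single_smul, smul_eq_mul, mul_one]

section

variable {E F : Type*} [NormedAddCommGroup E] [NormedSpace ℝ E]
  [NormedAddCommGroup F] [NormedSpace ℝ F]

theorem fderiv_apply_self_of_homogeneous {f : E → F} {x : E} {k : ℕ}
    (hf : DifferentiableAt ℝ f x) (hhom : ∀ t : ℝ, f (t • x) = t ^ k • f x) :
    fderiv ℝ f x x = (k : ℝ) • f x := by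
  have hray : HasDerivAt (fun t : ℝ => f (t • x)) (fderiv ℝ f x x) 1 := by
    rw [← one_smul ℝ x] at hf
    have := hf.hasFDerivAt.comp_hasDerivAt 1 ((hasDerivAt_id (1 : ℝ)).smul_const x)
    rwa [one_smul] at this
  have hpow : HasDerivAt (fun t : ℝ => t ^ k • f x) ((k : ℝ) • f x) 1 := by
    simpa using (hasDerivAt_pow k (1 : ℝ)).smul_const (f x)
  exact hray.unique (by simpa only [hhom] using hpow)

theorem hasFDerivAt_fderiv_apply {u : E → F} {V : E → E} {x : E}
    (hu : ContDiffAt ℝ 2 u x) (hV : DifferentiableAt ℝ V x) :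
    HasFDerivAt (fun y => fderiv ℝ u y (V y))
      ((fderiv ℝ u x).comp (fderiv ℝ V x) + (fderiv ℝ (fderiv ℝ u) x).flip (V x)) x :=
  ((hu.fderiv_right (m := 1) le_rfl).differentiableAt one_ne_zero).hasFDerivAt.clm_apply
    hV.hasFDerivAt

noncomputable def eulerDefect (u : E → F) (x : E) : F := fderiv ℝ u x x - u x

theorem hasFDerivAt_eulerDefect {u : E → F} {x : E} (hu : ContDiffAt ℝ 2 u x) :
    HasFDerivAt (eulerDefect u) ((fderiv ℝ (fderiv ℝ u) x).flip x) x := by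
  convert (hasFDerivAt_fderiv_apply hu differentiableAt_id).fun_sub
    (hu.differentiableAt two_ne_zero).hasFDerivAt using 1 <;> ext <;> simp [eulerDefect]

theorem fderiv_eulerDefect_apply_sub_self {u : E → F} {W : E → E} {x : E} {k : ℕ}
    (hu : ContDiffAt ℝ 2 u x) (hW : DifferentiableAt ℝ W x)
    (hhom : ∀ t : ℝ, W (t • x) = t ^ k • W x)
    (hpde : ∀ y, fderiv ℝ u y (W y - y) = -u y) :
    fderiv ℝ (eulerDefect u) x (W x - x) = -(k : ℝ) • eulerDefect u x := by
  set D2 := fderiv ℝ (fderiv ℝ u) x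
  have hV : HasFDerivAt (fun y => W y - y) (fderiv ℝ W x - ContinuousLinearMap.id ℝ E) x :=
    hW.hasFDerivAt.sub (hasFDerivAt_id x)
  have hzero : HasFDerivAt (fun y => fderiv ℝ u y (W y - y) + u y)
      ((fderiv ℝ u x).comp (fderiv ℝ W x - ContinuousLinearMap.id ℝ E) + D2.flip (W x - x)
        + fderiv ℝ u x) x := by
    rw [← hV.fderiv]
    exact (hasFDerivAt_fderiv_apply hu hV.differentiableAt).fun_add
      (hu.differentiableAt two_ne_zero).hasFDerivAt
  have hradial := congrArg (· x) (hzero.unique (by simpa [hpde] using hasFDerivAt_const (0 : F) x))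
  have hsymm : D2 (W x - x) x = D2 x (W x - x) := hu.isSymmSndFDerivAt (by simp) _ _
  simp only [ContinuousLinearMap.comp_sub, ContinuousLinearMap.comp_id, map_sub, add_apply,
    sub_apply, ContinuousLinearMap.comp_apply, fderiv_apply_self_of_homogeneous hW hhom, map_smul,
    ContinuousLinearMap.flip_apply, zero_apply] at hradial
  have hpdex : fderiv ℝ u x (W x) - fderiv ℝ u x x = -u x := by rw [← map_sub, hpde]
  rw [(hasFDerivAt_eulerDefect hu).fderiv, ContinuousLinearMap.flip_apply, hsymm, eulerDefect,
    map_sub]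
  linear_combination (norm := module) hradial - (k : ℝ) • hpdex

end

theorem stmt_0_general (n : ℕ)
    (ϖ : Fin n → (Fin n → ℝ) → ℝ)
    (hϖ : ∀ i, ContDiff ℝ 1 (ϖ i))
    (hhom : ∀ (i : Fin n) (t : ℝ) (x : Fin n → ℝ), ϖ i (t • x) = t ^ 2 * ϖ i x)
    (u : (Fin n → ℝ) → ℝ) (hu : ContDiff ℝ 2 u)
    (hpde : ∀ x : Fin n → ℝ,
      ∑ i, fderiv ℝ u x (Pi.single i 1) * (ϖ i x - x i) = -u x)
    (U : (Fin n → ℝ) → ℝ)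
    (hU : ∀ x : Fin n → ℝ,
      U x = ∑ i, x i * fderiv ℝ u x (Pi.single i 1) - u x) :
    ∀ x : Fin n → ℝ,
      ∑ i, fderiv ℝ U x (Pi.single i 1) * (ϖ i x - x i) = -2 * U x := by
  let W : (Fin n → ℝ) → Fin n → ℝ := fun x i => ϖ i x
  have hW : Differentiable ℝ W := differentiable_pi.2 fun i => (hϖ i).differentiable one_ne_zero
  have hWhom (x : Fin n → ℝ) (t : ℝ) : W (t • x) = t ^ 2 • W x := funext fun i => hhom i t x
  have hpdeW (x : Fin n → ℝ) : fderiv ℝ u x (W x - x) = -u x := by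
    rw [← sum_map_single_mul]
    exact hpde x
  have hUeq : U = eulerDefect u := funext fun x => by
    rw [hU, eulerDefect, ← sum_map_single_mul]
    simp only [mul_comm]
  intro x
  rw [hUeq, sum_map_single_mul]
  exact fderiv_eulerDefect_apply_sub_self hu.contDiffAt (hW x) (hWhom x) hpdeW

/-- If `u` solves `∑ i, uₓᵢ·(ϖ⁽ⁱ⁾ − xᵢ) = −u` with 2-homogeneous `C¹`
vector field components `ϖ⁽ⁱ⁾`, then `𝒰 = ∑ i, xᵢ·uₓᵢ − u` solves the same PDE
with an extra factor 2. -/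
theorem stmt_0 (n : ℕ) (hn : 1 ≤ n)
    (ϖ : Fin n → (Fin n → ℝ) → ℝ)
    (hϖ : ∀ i, ContDiff ℝ 1 (ϖ i))
    (hhom : ∀ (i : Fin n) (t : ℝ) (x : Fin n → ℝ), ϖ i (t • x) = t ^ 2 * ϖ i x)
    (u : (Fin n → ℝ) → ℝ) (hu : ContDiff ℝ 2 u)
    (hpde : ∀ x : Fin n → ℝ,
      ∑ i, fderiv ℝ u x (Pi.single i 1) * (ϖ i x - x i) = -u x)
    (U : (Fin n → ℝ) → ℝ)
    (hU : ∀ x : Fin n → ℝ,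
      U x = ∑ i, x i * fderiv ℝ u x (Pi.single i 1) - u x) :
    ∀ x : Fin n → ℝ,
      ∑ i, fderiv ℝ U x (Pi.single i 1) * (ϖ i x - x i) = -2 * U x :=
  stmt_0_general n ϖ hϖ hhom u hu hpde U hU
end

section
/- Let d ≥ 1 be an integer. For m ∈ ℕ let P_m(x,y) = Re((x+iy)^m) and Q_m(x,y) = Im((x+iy)^m) be the standard harmonic polynomials. Define, for (x,y) ≠ (0,0), the vector field V(x,y) = (ϖ(x,y), ρ(x,y)) with ϖ(x,y) = (P_{2d}(x,y) + (−1)^d·Q_{2d}(x,y))/(x²+y²)^{d−1} and ρ(x,y) = ((−1)^d·P_{2d}(x,y) − Q_{2d}(x,y))/(x²+y²)^{d−1}. Let κ = 2π/(2d+1), let R : ℝ² → ℝ² be the rotation R(x,y) = (x·cos κ − y·sin κ, x·sin κ + y·cos κ), and let S(x,y) = (y,x). Then for all (x,y) ≠ (0,0): V(R(x,y)) = R(V(x,y)) and V(S(x,y)) = S(V(x,y)); that is, V is invariant under conjugation by every element of the dihedral group 𝔻_{2d+1} generated by R and S. -/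
/-- the dihedral vector field
`ϖ = (P₂d + (−1)^d Q₂d)/(x²+y²)^{d−1}`, `ρ = ((−1)^d P₂d − Q₂d)/(x²+y²)^{d−1}`
is invariant under conjugation by the rotation through `2π/(2d+1)` and by the
swap `(x,y) ↦ (y,x)`, i.e. under the dihedral group `𝔻_{2d+1}`. -/
theorem stmt_2 (d : ℕ) (hd : 1 ≤ d)
    (P Q : ℕ → ℝ → ℝ → ℝ)
    (hP : ∀ (m : ℕ) (x y : ℝ), P m x y = (((x : ℂ) + Complex.I * y) ^ m).re)
    (hQ : ∀ (m : ℕ) (x y : ℝ), Q m x y = (((x : ℂ) + Complex.I * y) ^ m).im)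
    (ϖ ρ : ℝ → ℝ → ℝ)
    (hϖ : ∀ x y : ℝ, ϖ x y =
      (P (2 * d) x y + (-1) ^ d * Q (2 * d) x y) / (x ^ 2 + y ^ 2) ^ (d - 1))
    (hρ : ∀ x y : ℝ, ρ x y =
      ((-1) ^ d * P (2 * d) x y - Q (2 * d) x y) / (x ^ 2 + y ^ 2) ^ (d - 1))
    (κ : ℝ) (hκ : κ = 2 * Real.pi / (2 * d + 1)) :
    ∀ x y : ℝ, (x, y) ≠ (0, 0) →
      (ϖ (x * Real.cos κ - y * Real.sin κ) (x * Real.sin κ + y * Real.cos κ)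
          = ϖ x y * Real.cos κ - ρ x y * Real.sin κ ∧
        ρ (x * Real.cos κ - y * Real.sin κ) (x * Real.sin κ + y * Real.cos κ)
          = ϖ x y * Real.sin κ + ρ x y * Real.cos κ) ∧
      (ϖ y x = ρ x y ∧ ρ y x = ϖ x y) := by
  intro x y hxy
  have hz2 : x ^ 2 + y ^ 2 ≠ 0 := by
    intro h
    have hx : x = 0 := by nlinarith [sq_nonneg x, sq_nonneg y]
    have hy : y = 0 := by nlinarith [sq_nonneg x, sq_nonneg y]
    exact hxy (by simp [hx, hy])
  have hs : (x ^ 2 + y ^ 2) ^ (d - 1) ≠ 0 := pow_ne_zero _ hz2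
  set z : ℂ := (x : ℂ) + Complex.I * y with hzdef
  set A : ℝ := (z ^ (2 * d)).re with hA
  set B : ℝ := (z ^ (2 * d)).im with hB
  set e : ℝ := (-1 : ℝ) ^ d with he
  have he2 : e * e = 1 := by
    rw [he, ← pow_add]
    exact Even.neg_one_pow ⟨d, rfl⟩
  -- rotation
  set c : ℂ := (Real.cos κ : ℂ) + Complex.I * Real.sin κ with hcdef
  have hcz : ((x * Real.cos κ - y * Real.sin κ : ℝ) : ℂ)
      + Complex.I * ((x * Real.sin κ + y * Real.cos κ : ℝ) : ℂ) = c * z := by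
    rw [hcdef, hzdef]
    push_cast [-Complex.ofReal_cos, -Complex.ofReal_sin]
    linear_combination (-(y : ℂ) * (Real.sin κ : ℂ)) * Complex.I_sq
  have hre : c.re = Real.cos κ := by simp [hcdef, Complex.cos_ofReal_re, Complex.sin_ofReal_re]
  have him : c.im = Real.sin κ := by simp [hcdef, Complex.cos_ofReal_re, Complex.sin_ofReal_re]
  have htrig : Real.cos κ * Real.cos κ + Real.sin κ * Real.sin κ = 1 := by
    nlinarith [Real.sin_sq_add_cos_sq κ]
  have hnorm1 : (starRingEnd ℂ) c * c = 1 := by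
    rw [mul_comm, Complex.mul_conj, Complex.normSq_apply, hre, him, htrig]
    norm_num
  have hc : c = Complex.exp (κ * Complex.I) := by
    rw [hcdef, Complex.exp_mul_I, Complex.ofReal_cos, Complex.ofReal_sin]
    ring
  have hcpow : c ^ (2 * d + 1) = 1 := by
    rw [hc, ← Complex.exp_nat_mul]
    have hne : (2 * (d : ℂ) + 1) ≠ 0 := by
      have : (2 * (d : ℝ) + 1) ≠ 0 := by positivity
      exact_mod_cast this
    have h21 : ((2 * d + 1 : ℕ) : ℂ) * (↑κ * Complex.I) = 2 * Real.pi * Complex.I := by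
      rw [hκ]
      push_cast
      field_simp
    rw [h21, Complex.exp_two_pi_mul_I]
  have hcne : c ≠ 0 := by
    intro h; rw [h] at hnorm1; simp at hnorm1
  have hc2d : c ^ (2 * d) = (starRingEnd ℂ) c := by
    have h1 : c ^ (2 * d) * c = (starRingEnd ℂ) c * c := by
      rw [← pow_succ, hcpow, hnorm1]
    exact mul_right_cancel₀ hcne h1
  have hconjre : ((starRingEnd ℂ) c).re = Real.cos κ := by simp [hre]
  have hconjim : ((starRingEnd ℂ) c).im = -Real.sin κ := by simp [him]
  have hczpow : (c * z) ^ (2 * d) = (starRingEnd ℂ) c * z ^ (2 * d) := by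
    rw [mul_pow, hc2d]
  have hA' : ((c * z) ^ (2 * d)).re = Real.cos κ * A + Real.sin κ * B := by
    rw [hczpow, Complex.mul_re, hconjre, hconjim, ← hA, ← hB]
    ring
  have hB' : ((c * z) ^ (2 * d)).im = Real.cos κ * B - Real.sin κ * A := by
    rw [hczpow, Complex.mul_im, hconjre, hconjim, ← hA, ← hB]
    ring
  have hsum : (x * Real.cos κ - y * Real.sin κ) ^ 2 + (x * Real.sin κ + y * Real.cos κ) ^ 2
      = x ^ 2 + y ^ 2 := by nlinarith [Real.sin_sq_add_cos_sq κ]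
  -- swap
  have hswap : ((y : ℂ) + Complex.I * x) ^ (2 * d)
      = ((e : ℝ) : ℂ) * (starRingEnd ℂ) (z ^ (2 * d)) := by
    have h1 : (y : ℂ) + Complex.I * x = Complex.I * (starRingEnd ℂ) z := by
      rw [hzdef]
      simp [Complex.ext_iff]
    rw [h1, mul_pow, ← map_pow, pow_mul, Complex.I_sq, he]
    push_cast
    ring
  have hswre : (((y : ℂ) + Complex.I * x) ^ (2 * d)).re = e * A := by
    rw [hswap, Complex.mul_re, Complex.ofReal_re, Complex.ofReal_im, Complex.conj_re, ← hA]
    ring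
  have hswim : (((y : ℂ) + Complex.I * x) ^ (2 * d)).im = -(e * B) := by
    rw [hswap, Complex.mul_im, Complex.ofReal_re, Complex.ofReal_im, Complex.conj_im, ← hB]
    ring
  have hcomm : y ^ 2 + x ^ 2 = x ^ 2 + y ^ 2 := add_comm _ _
  refine ⟨⟨?_, ?_⟩, ?_, ?_⟩
  · simp only [hϖ, hρ, hP, hQ, hcz, hsum, hA', hB', ← hA, ← hB, ← he]
    field_simp
    ring
  · simp only [hϖ, hρ, hP, hQ, hcz, hsum, hA', hB', ← hA, ← hB, ← he]
    field_simp
    ring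
  · simp only [hϖ, hρ, hP, hQ, hswre, hswim, hcomm, ← hA, ← hB, ← he]
    linear_combination (-(B / (x ^ 2 + y ^ 2) ^ (d - 1))) * he2
  · simp only [hϖ, hρ, hP, hQ, hswre, hswim, hcomm, ← hA, ← hB, ← he]
    linear_combination (A / (x ^ 2 + y ^ 2) ^ (d - 1)) * he2
end

section
/- Let d ≥ 1 be an integer. For m ∈ ℕ let P_m(x,y) = Re((x+iy)^m) and Q_m(x,y) = Im((x+iy)^m), and set 𝒲(x,y) = P_{2d+1}(x,y) − (−1)^d·Q_{2d+1}(x,y). Then for all (x,y) ∈ ℝ²: (∂𝒲/∂x)(x,y)·(P_{2d}(x,y) + (−1)^d·Q_{2d}(x,y)) + (∂𝒲/∂y)(x,y)·((−1)^d·P_{2d}(x,y) − Q_{2d}(x,y)) = 0. In other words, 𝒲 is a first integral of the dihedral superflow vector field ϖ_{2d+1} ∙ ρ_{2d+1}, so the orbits of the superflow φ_{𝔻_{2d+1}} lie on the curves 𝒲(x,y) = const. -/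
/-- `𝒲 = P_{2d+1} − (−1)^d Q_{2d+1}` is a first integral of the
dihedral superflow vector field `ϖ_{2d+1} ∙ ρ_{2d+1}` (after clearing the common
denominator `(x²+y²)^{d−1}`): `𝒲ₓ·(P₂d + (−1)^d Q₂d) + 𝒲_y·((−1)^d P₂d − Q₂d) = 0`. -/
theorem stmt_3 (d : ℕ) (hd : 1 ≤ d)
    (P Q : ℕ → ℝ → ℝ → ℝ)
    (hP : ∀ (m : ℕ) (x y : ℝ), P m x y = (((x : ℂ) + Complex.I * y) ^ m).re)
    (hQ : ∀ (m : ℕ) (x y : ℝ), Q m x y = (((x : ℂ) + Complex.I * y) ^ m).im)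
    (W : ℝ → ℝ → ℝ)
    (hW : ∀ x y : ℝ, W x y = P (2 * d + 1) x y - (-1) ^ d * Q (2 * d + 1) x y) :
    ∀ x y : ℝ,
      deriv (fun s => W s y) x * (P (2 * d) x y + (-1) ^ d * Q (2 * d) x y)
        + deriv (fun s => W x s) y * ((-1) ^ d * P (2 * d) x y - Q (2 * d) x y) = 0 := by
  intro x y
  set n : ℕ := 2 * d + 1 with hn
  set z : ℂ := (x : ℂ) + Complex.I * y with hz
  have hfx : HasDerivAt (fun s : ℝ => (((s : ℂ) + Complex.I * y) ^ n))
      ((n : ℂ) * z ^ (2 * d)) x := by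
    have h1 : HasDerivAt (fun w : ℂ => (w + Complex.I * y) ^ n)
        ((n : ℂ) * ((x : ℂ) + Complex.I * y) ^ (n - 1) * 1) (x : ℂ) :=
      (hasDerivAt_pow n _).comp _ ((hasDerivAt_id _).add_const _)
    simpa [hz, hn] using h1.comp_ofReal
  have hfy : HasDerivAt (fun s : ℝ => (((x : ℂ) + Complex.I * s) ^ n))
      ((n : ℂ) * z ^ (2 * d) * Complex.I) y := by
    have h0 : HasDerivAt (fun w : ℂ => (x : ℂ) + Complex.I * w) Complex.I (y : ℂ) := by
      simpa using ((hasDerivAt_id (y : ℂ)).const_mul Complex.I).const_add (x : ℂ)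
    have h1 := (hasDerivAt_pow n ((x : ℂ) + Complex.I * y)).comp (y : ℂ) h0
    simpa [hz, hn, mul_assoc] using h1.comp_ofReal
  have hWx : deriv (fun s => W s y) x
      = ((n : ℂ) * z ^ (2 * d)).re - (-1) ^ d * ((n : ℂ) * z ^ (2 * d)).im := by
    have hre := Complex.reCLM.hasFDerivAt.comp_hasDerivAt x hfx
    have him := Complex.imCLM.hasFDerivAt.comp_hasDerivAt x hfx
    have heq : (fun s => W s y)
        = fun s : ℝ => (((s : ℂ) + Complex.I * y) ^ n).re
            - (-1) ^ d * (((s : ℂ) + Complex.I * y) ^ n).im := by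
      funext s; rw [hW, hP, hQ]
    rw [heq]
    exact (hre.sub (him.const_mul ((-1 : ℝ) ^ d))).deriv
  have hWy : deriv (fun s => W x s) y
      = ((n : ℂ) * z ^ (2 * d) * Complex.I).re
        - (-1) ^ d * ((n : ℂ) * z ^ (2 * d) * Complex.I).im := by
    have hre := Complex.reCLM.hasFDerivAt.comp_hasDerivAt y hfy
    have him := Complex.imCLM.hasFDerivAt.comp_hasDerivAt y hfy
    have heq : (fun s => W x s)
        = fun s : ℝ => (((x : ℂ) + Complex.I * s) ^ n).re
            - (-1) ^ d * (((x : ℂ) + Complex.I * s) ^ n).im := by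
      funext s; rw [hW, hP, hQ]
    rw [heq]
    exact (hre.sub (him.const_mul ((-1 : ℝ) ^ d))).deriv
  rw [hWx, hWy, hP, hQ]
  have hε : ((-1 : ℝ) ^ d) * ((-1 : ℝ) ^ d) = 1 := by
    rw [← pow_add, ← two_mul, pow_mul]; norm_num
  simp only [Complex.mul_re, Complex.mul_im, Complex.natCast_re, Complex.natCast_im,
    Complex.I_re, Complex.I_im, ← hz]
  have hε2 : ((-1 : ℝ)) ^ (d * 2) = 1 := by
    rw [pow_mul']; norm_num
  ring_nf
  rw [hε2]
  ring
end

section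
/- Let W(x) = x⁵ − 5x⁴ − 10x³ + 10x² + 5x − 1 (equivalently W(x) = (x−1)(x⁴−4x³−14x²−4x+1)). For j ∈ {0,1,2,3,4} set κ_j = 2πj/5. Then for every real x with −x·sin κ_j + cos κ_j ≠ 0 one has W( (x·cos κ_j + sin κ_j)/(−x·sin κ_j + cos κ_j) ) · (−x·sin κ_j + cos κ_j)⁵ = W(x). -/
/-!
Writing `ζ = cos κ - i sin κ`, the substitution `x ↦ (x cos κ + sin κ)/(-x sin κ + cos κ)` is the
rotation `x + i ↦ ζ (x + i)` followed by rescaling by the real number `-x sin κ + cos κ`.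
Since `W(x) = Re((1 + i)(x + i)⁵)`, the factor `(-x sin κ + cos κ)⁵` undoes the rescaling, and
`ζ⁵ = 1` for `κ = 2πj/5`.
-/

open Complex

lemma cos_sub_sin_mul_I_pow_eq_one {n : ℕ} {κ : ℝ} (j : ℤ) (hκ : n * κ = 2 * Real.pi * j) :
    ((Real.cos κ : ℂ) - Real.sin κ * I) ^ n = 1 := by
  have hexp : (Real.cos κ : ℂ) - Real.sin κ * I = exp (-κ * I) := by
    rw [exp_mul_I, cos_neg, sin_neg, ofReal_cos, ofReal_sin]
    ring
  rw [hexp, ← exp_nat_mul]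
  convert exp_int_mul_two_pi_mul_I (-j) using 2
  have hκ' : (n : ℂ) * κ = 2 * Real.pi * j := by exact_mod_cast hκ
  push_cast
  linear_combination -I * hκ'

lemma ofReal_moebius_add_I_mul {x c s : ℝ} (hd : -x * s + c ≠ 0) :
    ((((x * c + s) / (-x * s + c) : ℝ) : ℂ) + I) * (-x * s + c : ℝ) = (x + I) * (c - s * I) := by
  have hd' : (-x * s + c : ℂ) ≠ 0 := by exact_mod_cast hd
  push_cast
  rw [add_mul, div_mul_cancel₀ _ hd']
  linear_combination s * I_sq

theorem re_mul_moebius_add_I_pow_mul_pow (a : ℂ) {n : ℕ} {κ : ℝ}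
    (hζ : ((Real.cos κ : ℂ) - Real.sin κ * I) ^ n = 1) {x : ℝ}
    (hd : -x * Real.sin κ + Real.cos κ ≠ 0) :
    (a * (((x * Real.cos κ + Real.sin κ) / (-x * Real.sin κ + Real.cos κ) : ℝ) + I) ^ n).re
        * (-x * Real.sin κ + Real.cos κ) ^ n = (a * (x + I) ^ n).re := by
  rw [← re_mul_ofReal, ofReal_pow, mul_assoc, ← mul_pow, ofReal_moebius_add_I_mul hd, mul_pow, hζ,
    mul_one]

lemma quintic_eq_re (x : ℝ) :
    x ^ 5 - 5 * x ^ 4 - 10 * x ^ 3 + 10 * x ^ 2 + 5 * x - 1 = ((1 + I) * (x + I) ^ 5).re := by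
  simp only [pow_succ, pow_zero, one_mul, mul_re, mul_im, add_re, add_im, one_re, one_im, I_re,
    I_im, ofReal_re, ofReal_im]
  ring

theorem stmt_4_general (W : ℝ → ℝ)
    (hW : ∀ x : ℝ, W x = x ^ 5 - 5 * x ^ 4 - 10 * x ^ 3 + 10 * x ^ 2 + 5 * x - 1)
    (j : ℕ) (κ : ℝ) (hκ : κ = 2 * Real.pi * j / 5) :
    ∀ x : ℝ, -x * Real.sin κ + Real.cos κ ≠ 0 →
      W ((x * Real.cos κ + Real.sin κ) / (-x * Real.sin κ + Real.cos κ))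
          * (-x * Real.sin κ + Real.cos κ) ^ 5 = W x := by
  intro x hd
  have hζ : ((Real.cos κ : ℂ) - Real.sin κ * I) ^ 5 = 1 :=
    cos_sub_sin_mul_I_pow_eq_one j (by rw [hκ]; push_cast; ring)
  simp only [hW, quintic_eq_re]
  exact re_mul_moebius_add_I_pow_mul_pow (1 + I) hζ hd

/-- the quintic `W(x) = x⁵ − 5x⁴ − 10x³ + 10x² + 5x − 1` has the
5-fold Möbius symmetry `W((x·cos κⱼ + sin κⱼ)/(−x·sin κⱼ + cos κⱼ))·(−x·sin κⱼ + cos κⱼ)⁵ = W(x)`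
for `κⱼ = 2πj/5`, `j = 0,…,4`. -/
theorem stmt_4 (W : ℝ → ℝ)
    (hW : ∀ x : ℝ, W x = x ^ 5 - 5 * x ^ 4 - 10 * x ^ 3 + 10 * x ^ 2 + 5 * x - 1)
    (j : ℕ) (hj : j ≤ 4) (κ : ℝ) (hκ : κ = 2 * Real.pi * j / 5) :
    ∀ x : ℝ, -x * Real.sin κ + Real.cos κ ≠ 0 →
      W ((x * Real.cos κ + Real.sin κ) / (-x * Real.sin κ + Real.cos κ))
          * (-x * Real.sin κ + Real.cos κ) ^ 5 = W x :=
  stmt_4_general W hW j κ hκ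
end

section
/- Let W(t) = t⁵ − 5t⁴ − 10t³ + 10t² + 5t − 1 and let f(t) = (t²+1)·|W(t)|^{−4/5}. Then for every real x > 0 the (improper, convergent) integrals satisfy ∫_{1}^{1/x} f(t) dt = − ∫_{1}^{x} f(t) dt; equivalently, the abelian integral α(x) = ∫_{1}^{x} (t²+1)·|W(t)|^{−4/5} dt satisfies α(1/x) + α(x) = 0 for all x > 0. -/
/-!
`W` is antipalindromic, `W (1/t) = -W t / t⁵`, so `(t⁻²) f (1/t) = f t` for `t > 0`: the form
`f t dt` is invariant under `t ↦ 1/t`, which maps `[1, x]` onto `[1/x, 1]`. The one-dimensional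
change of variables formula for the Bochner integral needs no integrability, so the identity holds
without discussing convergence.
-/

open MeasureTheory Set

theorem Set.image_inv_Ioo_of_pos {a b : ℝ} (ha : 0 < a) (hb : 0 < b) :
    Inv.inv '' Ioo a b = Ioo b⁻¹ a⁻¹ := by
  ext y
  simp only [image_inv_eq_inv, mem_inv, mem_Ioo]
  constructor
  · rintro ⟨hay, hyb⟩
    have hy : 0 < y := inv_pos.mp (ha.trans hay)
    exact ⟨(inv_lt_comm₀ hy hb).mp hyb, (lt_inv_comm₀ ha hy).mp hay⟩
  · rintro ⟨hby, hya⟩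
    have hy : 0 < y := (inv_pos.mpr hb).trans hby
    exact ⟨(lt_inv_comm₀ ha hy).mpr hya, (inv_lt_comm₀ hy hb).mpr hby⟩

section InversionInvariance

variable {E : Type*} [NormedAddCommGroup E] [NormedSpace ℝ E]

theorem setIntegral_Ioo_inv_eq (f : ℝ → E) {a b : ℝ} (ha : 0 < a) (hb : 0 < b) :
    ∫ t in Ioo b⁻¹ a⁻¹, f t = ∫ t in Ioo a b, (t ^ 2)⁻¹ • f t⁻¹ := by
  have hderiv : ∀ t ∈ Ioo a b, HasDerivWithinAt Inv.inv (-(t ^ 2)⁻¹) (Ioo a b) t :=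
    fun t ht => (hasDerivAt_inv (ha.trans ht.1).ne').hasDerivWithinAt
  rw [← image_inv_Ioo_of_pos ha hb, integral_image_eq_integral_abs_deriv_smul measurableSet_Ioo
    hderiv inv_injective.injOn]
  simp only [abs_neg, abs_inv, abs_sq]

theorem intervalIntegral.integral_comp_inv_smul_inv_sq (f : ℝ → E) {a b : ℝ} (ha : 0 < a)
    (hb : 0 < b) : ∫ t in a..b, (t ^ 2)⁻¹ • f t⁻¹ = ∫ t in b⁻¹..a⁻¹, f t := by
  wlog hab : a ≤ b generalizing a b
  · rw [intervalIntegral.integral_symm, this hb ha (le_of_not_ge hab),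
      intervalIntegral.integral_symm, neg_neg]
  rw [intervalIntegral.integral_of_le hab, intervalIntegral.integral_of_le (inv_anti₀ ha hab),
    integral_Ioc_eq_integral_Ioo, integral_Ioc_eq_integral_Ioo, setIntegral_Ioo_inv_eq f ha hb]

theorem intervalIntegral.integral_one_inv_eq_neg (f : ℝ → E)
    (hf : ∀ t > 0, (t ^ 2)⁻¹ • f t⁻¹ = f t) {x : ℝ} (hx : 0 < x) :
    ∫ t in (1 : ℝ)..x⁻¹, f t = -∫ t in (1 : ℝ)..x, f t := by
  have hpos : ∀ t ∈ uIcc 1 x, 0 < t := fun t ht => lt_of_lt_of_le (lt_min one_pos hx) ht.1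
  rw [← intervalIntegral.integral_congr fun t ht => hf t (hpos t ht),
    intervalIntegral.integral_comp_inv_smul_inv_sq f one_pos hx, inv_one,
    intervalIntegral.integral_symm]

end InversionInvariance

theorem abs_inv_eq_of_antipalindromic {W : ℝ → ℝ}
    (hW : ∀ t : ℝ, W t = t ^ 5 - 5 * t ^ 4 - 10 * t ^ 3 + 10 * t ^ 2 + 5 * t - 1) {t : ℝ}
    (ht : 0 < t) : |W t⁻¹| = |W t| / t ^ 5 := by
  have hWinv : W t⁻¹ = -W t / t ^ 5 := by
    rw [hW, hW]
    field_simp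
    ring
  rw [hWinv, abs_div, abs_neg, abs_of_pos (pow_pos ht 5)]

theorem inv_sq_mul_integrand_inv {W : ℝ → ℝ} {t : ℝ} (ht : 0 < t)
    (hWt : |W t⁻¹| = |W t| / t ^ 5) :
    (t ^ 2)⁻¹ * ((t⁻¹ ^ 2 + 1) * |W t⁻¹| ^ (-(4 : ℝ) / 5)) =
      (t ^ 2 + 1) * |W t| ^ (-(4 : ℝ) / 5) := by
  have ht5 : (t ^ 5) ^ (-(4 : ℝ) / 5) = (t ^ 4)⁻¹ := by
    rw [← Real.rpow_natCast t 5, ← Real.rpow_mul ht.le]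
    norm_num
  rw [hWt, Real.div_rpow (abs_nonneg _) (pow_pos ht 5).le, ht5]
  field_simp
  ring

/-- the abelian integral `α(x) = ∫₁ˣ (t²+1)·|W(t)|^{−4/5} dt`
satisfies the involutive identity `α(1/x) = −α(x)` for all `x > 0`. -/
theorem stmt_5 (W f : ℝ → ℝ)
    (hW : ∀ t : ℝ, W t = t ^ 5 - 5 * t ^ 4 - 10 * t ^ 3 + 10 * t ^ 2 + 5 * t - 1)
    (hf : ∀ t : ℝ, f t = (t ^ 2 + 1) * |W t| ^ (-(4 : ℝ) / 5)) :
    ∀ x : ℝ, 0 < x →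
      (∫ t in (1 : ℝ)..(1 / x), f t) = -∫ t in (1 : ℝ)..x, f t := by
  intro x hx
  rw [one_div]
  refine intervalIntegral.integral_one_inv_eq_neg f (fun t ht => ?_) hx
  rw [smul_eq_mul, hf, hf]
  exact inv_sq_mul_integrand_inv ht (abs_inv_eq_of_antipalindromic hW ht)
end

section
/- Let W(t) = t⁵ − 5t⁴ − 10t³ + 10t² + 5t − 1, let f(t) = (t²+1)·|W(t)|^{−4/5}, and define the fundamental period Ω = (1/5)·∫_{−∞}^{∞} f(t) dt (a finite positive real number). Let ξ_j = tan(π/4 + 2πj/5) for j = 0,1,2,3,4 (these are exactly the real roots of W, with ξ₁ < ξ₄ < ξ₂ < ξ₀ = 1 < ξ₃). Then: ∫_{1}^{ξ₃} f(t) dt = Ω, ∫_{1}^{ξ₂} f(t) dt = −Ω, ∫_{1}^{ξ₄} f(t) dt = −2Ω, ∫_{1}^{ξ₁} f(t) dt = −3Ω, and ∫_{−1}^{1} f(t) dt = (5/2)·Ω. -/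
/-!
Substitute `t = tan θ`. Since `(1 + t²) dt = dθ / cos⁴θ` and
`cos⁵θ · W(tan θ) = sin 5θ - cos 5θ = √2 sin (5θ - π/4)`, the form `f(t) dt` becomes
`g(θ) dθ` with `g θ = |√2 sin (5θ - π/4)|^{-4/5}`, which is `π/5`-periodic and invariant under
`θ ↦ π/2 - θ`. The roots are `ξⱼ = tan (π/4 + nπ/5)` for some `-3 ≤ n ≤ 1`, so each integral
from `1 = tan (π/4)` to a root spans `n` periods of `g`, and `∫_ℝ f` spans the five periods
in `(-π/2, π/2)`. The reflection `θ ↦ π/2 - θ` maps `[-π/4, π/4]` onto `[π/4, 3π/4]`; together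
they make five periods, so `∫_{-1}^{1} f = 5Ω/2`.
-/

open MeasureTheory Real Set intervalIntegral

section TangentSubstitution

variable {E : Type*} [NormedAddCommGroup E] [NormedSpace ℝ E]

theorem image_tan_Ioo_of_le {a b : ℝ} (ha : -(π / 2) < a) (hab : a ≤ b) (hb : b < π / 2) :
    tan '' Ioo a b = Ioo (tan a) (tan b) := by
  have hsub : Icc a b ⊆ Ioo (-(π / 2)) (π / 2) := Icc_subset_Ioo ha hb
  exact (continuousOn_tan_Ioo.mono hsub).image_Ioo_of_strictMonoOn hab (strictMonoOn_tan.mono hsub)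

theorem setIntegral_image_tan {s : Set ℝ} (hs : MeasurableSet s)
    (hs' : s ⊆ Ioo (-(π / 2)) (π / 2)) (h : ℝ → E) :
    ∫ t in tan '' s, h t = ∫ θ in s, (1 / cos θ ^ 2) • h (tan θ) := by
  have hcos : ∀ θ ∈ s, 0 < cos θ := fun θ hθ => cos_pos_of_mem_Ioo (hs' hθ)
  rw [integral_image_eq_integral_abs_deriv_smul hs
    (fun θ hθ => (hasDerivAt_tan (hcos θ hθ).ne').hasDerivWithinAt) (injOn_tan.mono hs') h]
  refine setIntegral_congr_fun hs fun θ hθ => ?_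
  have := hcos θ hθ
  rw [abs_of_pos (by positivity)]

theorem intervalIntegral_tan {a b : ℝ} (ha : a ∈ Ioo (-(π / 2)) (π / 2))
    (hb : b ∈ Ioo (-(π / 2)) (π / 2)) (h : ℝ → E) :
    ∫ t in tan a..tan b, h t = ∫ θ in a..b, (1 / cos θ ^ 2) • h (tan θ) := by
  wlog hab : a ≤ b generalizing a b
  · rw [integral_symm, this hb ha (le_of_not_ge hab), integral_symm, neg_neg]
  rw [integral_of_le hab, integral_of_le (strictMonoOn_tan.monotoneOn ha hb hab),
    integral_Ioc_eq_integral_Ioo, integral_Ioc_eq_integral_Ioo,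
    ← image_tan_Ioo_of_le ha.1 hab hb.2]
  exact setIntegral_image_tan measurableSet_Ioo (Ioo_subset_Ioo ha.1.le hb.2.le) h

end TangentSubstitution

theorem intervalIntegrable_abs_sin_rpow {r : ℝ} (hr : -1 < r) (a b : ℝ) :
    IntervalIntegrable (fun x => |sin x| ^ r) volume a b := by
  have hper : Function.Periodic (fun x => |sin x| ^ r) π := fun x => by simp [sin_add_pi]
  have hright : IntervalIntegrable (fun x => |sin x| ^ r) volume 0 (π / 2) := by
    rcases le_or_gt 0 r with hr0 | hr0
    · exact (continuous_sin.abs.rpow_const fun _ => Or.inr hr0).intervalIntegrable _ _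
    refine (((intervalIntegrable_rpow' hr).const_mul ((2 / π) ^ r))).mono_fun
      (continuous_sin.abs.measurable.pow_const r).aestronglyMeasurable ?_
    rw [uIoc_of_le (by positivity)]
    filter_upwards [ae_restrict_mem measurableSet_Ioc] with x ⟨hx0, hxπ⟩
    have hsin : 2 / π * x ≤ |sin x| := by
      simpa [abs_of_pos hx0] using mul_abs_le_abs_sin (x := x) (by rwa [abs_of_pos hx0])
    rw [norm_of_nonneg (by positivity), norm_of_nonneg (by positivity),
      ← mul_rpow (by positivity) hx0.le]
    exact rpow_le_rpow_of_nonpos (by positivity) hsin hr0.le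
  have hleft : IntervalIntegrable (fun x => |sin x| ^ r) volume (-(π / 2)) 0 := by
    rw [IntervalIntegrable.iff_comp_neg]
    simpa using hright.symm
  refine hper.intervalIntegrable pi_ne_zero (t := -(π / 2)) ?_ a b
  rw [show -(π / 2) + π = π / 2 by ring]
  exact hleft.trans hright

theorem sin_five_mul (x : ℝ) :
    sin (5 * x) = 5 * cos x ^ 4 * sin x - 10 * cos x ^ 2 * sin x ^ 3 + sin x ^ 5 := by
  rw [show 5 * x = 2 * x + 3 * x by ring, sin_add, sin_two_mul, cos_two_mul, sin_three_mul,
    cos_three_mul]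
  linear_combination (sin x * (3 * cos x ^ 2 - sin x ^ 2 + 3)) * sin_sq_add_cos_sq x

theorem cos_five_mul (x : ℝ) :
    cos (5 * x) = cos x ^ 5 - 10 * cos x ^ 3 * sin x ^ 2 + 5 * cos x * sin x ^ 4 := by
  rw [show 5 * x = 2 * x + 3 * x by ring, cos_add, sin_two_mul, cos_two_mul, sin_three_mul,
    cos_three_mul]
  linear_combination (cos x * (7 * cos x ^ 2 + 3 * sin x ^ 2 - 3)) * sin_sq_add_cos_sq x

theorem sin_sub_cos (x : ℝ) : sin x - cos x = √2 * sin (x - π / 4) := by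
  rw [sin_sub, cos_pi_div_four, sin_pi_div_four]
  linear_combination (-(sin x - cos x) / 2) * Real.mul_self_sqrt (zero_le_two (α := ℝ))

noncomputable def quinticW (t : ℝ) : ℝ := t ^ 5 - 5 * t ^ 4 - 10 * t ^ 3 + 10 * t ^ 2 + 5 * t - 1

noncomputable def quinticDensity (t : ℝ) : ℝ := (t ^ 2 + 1) * |quinticW t| ^ (-(4 : ℝ) / 5)

noncomputable def quinticAngularDensity (θ : ℝ) : ℝ := |√2 * sin (5 * θ - π / 4)| ^ (-(4 : ℝ) / 5)

theorem cos_pow_five_mul_quinticW_tan {θ : ℝ} (hθ : cos θ ≠ 0) :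
    cos θ ^ 5 * quinticW (tan θ) = √2 * sin (5 * θ - π / 4) := by
  rw [← sin_sub_cos, sin_five_mul, cos_five_mul, quinticW, tan_eq_sin_div_cos]
  field_simp
  ring

theorem one_div_cos_sq_mul_quinticDensity_tan {θ : ℝ} (hθ : 0 < cos θ) :
    1 / cos θ ^ 2 * quinticDensity (tan θ) = quinticAngularDensity θ := by
  have hcos5 : (cos θ ^ 5) ^ (-(4 : ℝ) / 5) = (cos θ ^ 4)⁻¹ := by
    rw [← rpow_natCast, ← rpow_mul hθ.le, ← rpow_natCast, ← rpow_neg hθ.le]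
    norm_num
  rw [quinticDensity, quinticAngularDensity, ← cos_pow_five_mul_quinticW_tan hθ.ne', abs_mul,
    mul_rpow (abs_nonneg _) (abs_nonneg _), abs_of_pos (pow_pos hθ 5), hcos5, add_comm,
    ← inv_inv (1 + _), inv_one_add_tan_sq hθ.ne']
  field_simp

theorem quinticAngularDensity_periodic : Function.Periodic quinticAngularDensity (π / 5) := by
  intro θ
  rw [quinticAngularDensity, quinticAngularDensity,
    show 5 * (θ + π / 5) - π / 4 = 5 * θ - π / 4 + π by ring, sin_add_pi, mul_neg, abs_neg]

theorem quinticAngularDensity_pi_div_two_sub (θ : ℝ) :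
    quinticAngularDensity (π / 2 - θ) = quinticAngularDensity θ := by
  rw [quinticAngularDensity, quinticAngularDensity,
    show 5 * (π / 2 - θ) - π / 4 = -(5 * θ - π / 4) + 2 * π by ring, sin_add_two_pi, sin_neg,
    mul_neg, abs_neg]

theorem intervalIntegrable_quinticAngularDensity (a b : ℝ) :
    IntervalIntegrable quinticAngularDensity volume a b := by
  have h := ((intervalIntegrable_abs_sin_rpow (r := -(4 : ℝ) / 5) (by norm_num)
    (5 * a - π / 4) (5 * b - π / 4)).comp_sub_right (π / 4)).comp_mul_left (c := 5)
  simp only [sub_add_cancel, mul_div_cancel_left₀ _ (by norm_num : (5 : ℝ) ≠ 0)] at h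
  convert h.const_mul (|√2| ^ (-(4 : ℝ) / 5)) using 1
  ext θ
  rw [quinticAngularDensity, abs_mul, mul_rpow (abs_nonneg _) (abs_nonneg _)]

theorem quinticAngularDensity_pos {θ : ℝ} (hθ : θ ∈ Ioo (π / 20) (π / 4)) :
    0 < quinticAngularDensity θ := by
  have hsin : 0 < sin (5 * θ - π / 4) :=
    sin_pos_of_pos_of_lt_pi (by linarith [hθ.1]) (by linarith [hθ.2])
  have : 0 < |√2 * sin (5 * θ - π / 4)| := by positivity
  unfold quinticAngularDensity
  positivity

noncomputable def quinticPeriod : ℝ := ∫ θ in (0 : ℝ)..π / 5, quinticAngularDensity θ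

theorem intervalIntegral_quinticAngularDensity_add_int_mul (a : ℝ) (n : ℤ) :
    ∫ θ in a..a + n * (π / 5), quinticAngularDensity θ = n * quinticPeriod := by
  rw [← zsmul_eq_mul, quinticAngularDensity_periodic.intervalIntegral_add_zsmul_eq n a
      intervalIntegrable_quinticAngularDensity,
    quinticAngularDensity_periodic.intervalIntegral_add_eq a 0, zero_add, zsmul_eq_mul,
    quinticPeriod]

theorem quinticPeriod_pos : 0 < quinticPeriod := by
  have h := intervalIntegral_quinticAngularDensity_add_int_mul (π / 20) 1
  rw [Int.cast_one, one_mul, one_mul, show π / 20 + π / 5 = π / 4 by ring] at h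
  rw [← h]
  exact intervalIntegral_pos_of_pos_on (intervalIntegrable_quinticAngularDensity _ _)
    (fun θ hθ => quinticAngularDensity_pos hθ) (by linarith [pi_pos])

theorem intervalIntegral_quinticDensity_tan {a b : ℝ} (ha : a ∈ Ioo (-(π / 2)) (π / 2))
    (hb : b ∈ Ioo (-(π / 2)) (π / 2)) :
    ∫ t in tan a..tan b, quinticDensity t = ∫ θ in a..b, quinticAngularDensity θ := by
  rw [intervalIntegral_tan ha hb]
  refine integral_congr fun θ hθ => ?_
  have hθ' : θ ∈ Ioo (-(π / 2)) (π / 2) := ordConnected_Ioo.uIcc_subset ha hb hθ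
  exact one_div_cos_sq_mul_quinticDensity_tan (cos_pos_of_mem_Ioo hθ')

theorem integral_quinticDensity : ∫ t, quinticDensity t = 5 * quinticPeriod := by
  have hπ : -(π / 2) ≤ π / 2 := by linarith [pi_pos]
  rw [← setIntegral_univ, ← image_tan_Ioo, setIntegral_image_tan measurableSet_Ioo subset_rfl]
  simp only [smul_eq_mul]
  rw [setIntegral_congr_fun measurableSet_Ioo fun θ hθ =>
      one_div_cos_sq_mul_quinticDensity_tan (cos_pos_of_mem_Ioo hθ),
    ← integral_Ioc_eq_integral_Ioo, ← integral_of_le hπ]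
  have hfive := intervalIntegral_quinticAngularDensity_add_int_mul (-(π / 2)) 5
  rwa [show -(π / 2) + ((5 : ℤ) : ℝ) * (π / 5) = π / 2 by push_cast; ring, Int.cast_ofNat] at hfive

theorem intervalIntegral_quinticDensity_one_tan (n : ℤ) (h₁ : -3 ≤ n) (h₂ : n ≤ 1) :
    ∫ t in (1 : ℝ)..tan (π / 4 + n * (π / 5)), quinticDensity t = n * quinticPeriod := by
  have hn₁ : (-3 : ℝ) ≤ n := by exact_mod_cast h₁
  have hn₂ : (n : ℝ) ≤ 1 := by exact_mod_cast h₂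
  have hπ := pi_pos
  rw [← tan_pi_div_four, intervalIntegral_quinticDensity_tan,
    intervalIntegral_quinticAngularDensity_add_int_mul]
  · constructor <;> linarith
  · constructor <;> nlinarith

theorem intervalIntegral_quinticDensity_neg_one_one :
    ∫ t in (-1 : ℝ)..1, quinticDensity t = 5 / 2 * quinticPeriod := by
  have hπ := pi_pos
  have hreflect : ∫ θ in -(π / 4)..π / 4, quinticAngularDensity θ
      = ∫ θ in π / 4..3 * π / 4, quinticAngularDensity θ := by
    simpa only [quinticAngularDensity_pi_div_two_sub, show π / 2 - π / 4 = π / 4 by ring,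
      show π / 2 - -(π / 4) = 3 * π / 4 by ring]
      using integral_comp_sub_left (a := -(π / 4)) (b := π / 4) quinticAngularDensity (π / 2)
  have hfive := intervalIntegral_quinticAngularDensity_add_int_mul (-(π / 4)) 5
  rw [show -(π / 4) + ((5 : ℤ) : ℝ) * (π / 5) = 3 * π / 4 by push_cast; ring,
    ← integral_add_adjacent_intervals (intervalIntegrable_quinticAngularDensity _ (π / 4))
      (intervalIntegrable_quinticAngularDensity _ _), ← hreflect, Int.cast_ofNat] at hfive
  rw [show (-1 : ℝ) = tan (-(π / 4)) by rw [tan_neg, tan_pi_div_four], ← tan_pi_div_four,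
    intervalIntegral_quinticDensity_tan]
  · linarith
  · constructor <;> linarith
  · constructor <;> linarith

theorem tan_pi_div_four_add_two_pi_mul_div_five {j : ℕ} {n k : ℤ} (h : 2 * j = n + 5 * k) :
    tan (π / 4 + 2 * π * j / 5) = tan (π / 4 + n * (π / 5)) := by
  have h' : (2 * j : ℝ) = n + 5 * k := by exact_mod_cast h
  rw [← tan_add_int_mul_pi (π / 4 + n * (π / 5)) k]
  congr 1
  linear_combination π / 5 * h'

/-- values of the abelian integral `∫₁^{ξⱼ} (t²+1)|W(t)|^{−4/5} dt`
at the real roots `ξⱼ = tan(π/4 + 2πj/5)` of `W`, in terms of the fundamental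
period `Ω = (1/5)∫_ℝ (t²+1)|W(t)|^{−4/5} dt`. -/
theorem stmt_6 (W f : ℝ → ℝ)
    (hW : ∀ t : ℝ, W t = t ^ 5 - 5 * t ^ 4 - 10 * t ^ 3 + 10 * t ^ 2 + 5 * t - 1)
    (hf : ∀ t : ℝ, f t = (t ^ 2 + 1) * |W t| ^ (-(4 : ℝ) / 5))
    (Ω : ℝ) (hΩ : Ω = (1 / 5) * ∫ t : ℝ, f t)
    (ξ : ℕ → ℝ)
    (hξ : ∀ j : ℕ, ξ j = Real.tan (Real.pi / 4 + 2 * Real.pi * j / 5)) :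
    0 < Ω ∧
    (∫ t in (1 : ℝ)..ξ 3, f t) = Ω ∧
    (∫ t in (1 : ℝ)..ξ 2, f t) = -Ω ∧
    (∫ t in (1 : ℝ)..ξ 4, f t) = -2 * Ω ∧
    (∫ t in (1 : ℝ)..ξ 1, f t) = -3 * Ω ∧
    (∫ t in (-1 : ℝ)..1, f t) = (5 / 2) * Ω := by
  have hf' : f = quinticDensity := funext fun t => by rw [hf, hW]; rfl
  have hΩ' : Ω = quinticPeriod := by rw [hΩ, hf', integral_quinticDensity]; ring
  have hroot : ∀ j : ℕ, ∀ n k : ℤ, 2 * j = n + 5 * k → -3 ≤ n → n ≤ 1 →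
      ∫ t in (1 : ℝ)..ξ j, f t = n * Ω := fun j n k h h₁ h₂ => by
    rw [hξ, hf', hΩ', tan_pi_div_four_add_two_pi_mul_div_five h,
      intervalIntegral_quinticDensity_one_tan n h₁ h₂]
  refine ⟨hΩ' ▸ quinticPeriod_pos, ?_, ?_, ?_, ?_, ?_⟩
  · simpa using hroot 3 1 1 (by norm_num) (by norm_num) (by norm_num)
  · simpa using hroot 2 (-1) 1 (by norm_num) (by norm_num) (by norm_num)
  · simpa using hroot 4 (-2) 2 (by norm_num) (by norm_num) (by norm_num)
  · simpa using hroot 1 (-3) 1 (by norm_num) (by norm_num) (by norm_num)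
  · rw [hf', hΩ', intervalIntegral_quinticDensity_neg_one_one]
end

section
/- Let A, B : ℝ² → ℝ be homogeneous quadratic polynomials (quadratic forms) such that the planar vector field V = (A,B) is invariant under conjugation by the two matrices γ₁ = [[0,1],[1,0]] and γ₂ = [[1,−1],[0,−1]]; explicitly, for all (x,y) ∈ ℝ²: A(y,x) = B(x,y), B(y,x) = A(x,y), A(x−y,−y) = A(x,y) − B(x,y), and B(x−y,−y) = −B(x,y). Then there exists a constant c ∈ ℝ such that A(x,y) = c·(x² − 2xy) and B(x,y) = c·(y² − 2xy). -/
/-- up to a scalar multiple, `x² − 2xy ∙ y² − 2xy` is the unique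
quadratic-form planar vector field invariant under conjugation by the matrices
`[[0,1],[1,0]]` and `[[1,−1],[0,−1]]` generating `S₃ ≃ 𝔻₃`. -/
theorem stmt_7 (A B : ℝ → ℝ → ℝ)
    (hA : ∃ a b c : ℝ, ∀ x y : ℝ, A x y = a * x ^ 2 + b * x * y + c * y ^ 2)
    (hB : ∃ a b c : ℝ, ∀ x y : ℝ, B x y = a * x ^ 2 + b * x * y + c * y ^ 2)
    (h1 : ∀ x y : ℝ, A y x = B x y)
    (h2 : ∀ x y : ℝ, B y x = A x y)
    (h3 : ∀ x y : ℝ, A (x - y) (-y) = A x y - B x y)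
    (h4 : ∀ x y : ℝ, B (x - y) (-y) = -B x y) :
    ∃ c : ℝ, (∀ x y : ℝ, A x y = c * (x ^ 2 - 2 * x * y)) ∧
      (∀ x y : ℝ, B x y = c * (y ^ 2 - 2 * x * y)) := by
  obtain ⟨a, b, c0, ha⟩ := hA
  obtain ⟨d, e, f, hb⟩ := hB
  have e1 := h1 1 0
  have e2 := h1 0 1
  have e3 := h1 1 1
  have e4 := h4 1 0
  have e5 := h4 0 1
  simp only [ha, hb] at e1 e2 e3 e4 e5
  norm_num at e1 e2 e3 e4 e5
  have hd : d = 0 := by linarith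
  have hc0 : c0 = 0 := by linarith
  have hf : f = a := by linarith
  have he : e = -2 * a := by linarith
  have hbb : b = -2 * a := by linarith
  refine ⟨a, fun x y => ?_, fun x y => ?_⟩
  · rw [ha, hbb, hc0]; ring
  · rw [hb, hd, he, hf]; ring
end

section
/- Let A, B, C : ℝ³ → ℝ be homogeneous quadratic polynomials such that the vector field V = (A,B,C) is invariant under conjugation by the matrices diag(1,−1,−1), diag(−1,1,−1) and the cyclic permutation δ : (x,y,z) ↦ (y,z,x); explicitly, for all (x,y,z) ∈ ℝ³: A(x,−y,−z) = A(x,y,z), B(x,−y,−z) = −B(x,y,z), C(x,−y,−z) = −C(x,y,z); A(−x,y,−z) = −A(x,y,z), B(−x,y,−z) = B(x,y,z), C(−x,y,−z) = −C(x,y,z); and A(y,z,x) = B(x,y,z), B(y,z,x) = C(x,y,z), C(y,z,x) = A(x,y,z). Then there exists a ∈ ℝ such that A(x,y,z) = a·yz, B(x,y,z) = a·zx, C(x,y,z) = a·xy. In particular V is automatically also invariant under conjugation by the transposition (x,y,z) ↦ (y,x,z), i.e. A(y,x,z) = B(x,y,z), B(y,x,z) = A(x,y,z), C(y,x,z) =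 C(x,y,z): every 2-homogeneous polynomial vector field with tetrahedral symmetry 𝕋 has the full tetrahedral symmetry 𝕋̂. -/
/-- every quadratic-form vector field on ℝ³ invariant under the
tetrahedral rotation group 𝕋 (generated by `diag(1,−1,−1)`, `diag(−1,1,−1)` and
the cyclic permutation) is `a·(yz, zx, xy)`; in particular it automatically has
the full tetrahedral symmetry 𝕋̂ (invariance under the transposition). -/
theorem stmt_8 (A B C : ℝ → ℝ → ℝ → ℝ)
    (hA : ∃ c₁ c₂ c₃ c₄ c₅ c₆ : ℝ, ∀ x y z : ℝ,
      A x y z = c₁ * x ^ 2 + c₂ * y ^ 2 + c₃ * z ^ 2 + c₄ * x * y + c₅ * y * z + c₆ * x * z)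
    (hB : ∃ c₁ c₂ c₃ c₄ c₅ c₆ : ℝ, ∀ x y z : ℝ,
      B x y z = c₁ * x ^ 2 + c₂ * y ^ 2 + c₃ * z ^ 2 + c₄ * x * y + c₅ * y * z + c₆ * x * z)
    (hC : ∃ c₁ c₂ c₃ c₄ c₅ c₆ : ℝ, ∀ x y z : ℝ,
      C x y z = c₁ * x ^ 2 + c₂ * y ^ 2 + c₃ * z ^ 2 + c₄ * x * y + c₅ * y * z + c₆ * x * z)
    (hα₁ : ∀ x y z : ℝ, A x (-y) (-z) = A x y z)
    (hα₂ : ∀ x y z : ℝ, B x (-y) (-z) = -B x y z)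
    (hα₃ : ∀ x y z : ℝ, C x (-y) (-z) = -C x y z)
    (hβ₁ : ∀ x y z : ℝ, A (-x) y (-z) = -A x y z)
    (hβ₂ : ∀ x y z : ℝ, B (-x) y (-z) = B x y z)
    (hβ₃ : ∀ x y z : ℝ, C (-x) y (-z) = -C x y z)
    (hδ₁ : ∀ x y z : ℝ, A y z x = B x y z)
    (hδ₂ : ∀ x y z : ℝ, B y z x = C x y z)
    (hδ₃ : ∀ x y z : ℝ, C y z x = A x y z) :
    (∃ a : ℝ, ∀ x y z : ℝ,
      A x y z = a * (y * z) ∧ B x y z = a * (z * x) ∧ C x y z = a * (x * y)) ∧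
    (∀ x y z : ℝ, A y x z = B x y z ∧ B y x z = A x y z ∧ C y x z = C x y z) := by
  obtain ⟨c₁, c₂, c₃, c₄, c₅, c₆, hr⟩ := hA
  have e1 := hβ₁ 1 0 0
  have e2 := hβ₁ 0 1 0
  have e3 := hβ₁ 0 0 1
  have e4 := hα₁ 1 1 0
  have e6 := hβ₁ 1 0 1
  simp only [hr] at e1 e2 e3 e4 e6
  have hc₁ : c₁ = 0 := by nlinarith [e1]
  have hc₂ : c₂ = 0 := by nlinarith [e2]
  have hc₃ : c₃ = 0 := by nlinarith [e3]
  have hc₆ : c₆ = 0 := by nlinarith [e6, hc₁, hc₃]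
  have hc₄ : c₄ = 0 := by nlinarith [e4, hc₁, hc₂]
  have hAeq : ∀ x y z : ℝ, A x y z = c₅ * (y * z) := by
    intro x y z; rw [hr, hc₁, hc₂, hc₃, hc₄, hc₆]; ring
  have hBeq : ∀ x y z : ℝ, B x y z = c₅ * (z * x) := by
    intro x y z; rw [← hδ₁, hAeq]
  have hCeq : ∀ x y z : ℝ, C x y z = c₅ * (x * y) := by
    intro x y z; rw [← hδ₂, hBeq]
  constructor
  · exact ⟨c₅, fun x y z => ⟨hAeq x y z, hBeq x y z, hCeq x y z⟩⟩
  · intro x y z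
    refine ⟨?_, ?_, ?_⟩
    · rw [hAeq, hBeq]; all_goals ring
    · rw [hAeq, hBeq]; all_goals ring
    · rw [hCeq, hCeq]; all_goals ring
end

section
/- Let ξ ∈ ℝ and let X : ℝ → ℝ be a differentiable function satisfying (X'(t))² = 2·X(t)·(1 − ξ − 2X(t) + 2X(t)²)·(2ξ − 1 + 2X(t) − 3X(t)²) for all t, with X' differentiable where needed only through X (no further hypotheses). Define Υ(t) = −27·X(t)³ + 27·X(t)² − (27(1−ξ)/2)·X(t). Then for all t ∈ ℝ: (Υ'(t))² = 4·Υ(t)³ + (20 − 36ξ)·Υ(t)² − 27·(2ξ−1)·(ξ−1)²·Υ(t). Hence the (generically genus-2 hyperelliptic) parametrization (X, X') reduces to the Weierstrass-type elliptic equation for Υ. -/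
/-! By the chain rule `Υ' = u'(X) X'`, where `u` is the cubic defining `Υ`, so the differential
equation gives `Υ'² = u'(X)² · q(X)` with `q` the quintic. It remains to check the polynomial
identity `u'(x)² q(x) = W(u(x))` for the Weierstrass cubic `W`. It holds because `u` is chosen so
that the three roots of `u = Υ` have sum 1 and sum of squares `ξ`, the first integrals of the
superflow. -/

noncomputable def cubicChange (ξ x : ℝ) : ℝ := -27 * x ^ 3 + 27 * x ^ 2 - 27 * (1 - ξ) / 2 * x

def octahedralQuintic (ξ x : ℝ) : ℝ :=
  2 * x * (1 - ξ - 2 * x + 2 * x ^ 2) * (2 * ξ - 1 + 2 * x - 3 * x ^ 2)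

def weierstrassCubic (ξ u : ℝ) : ℝ :=
  4 * u ^ 3 + (20 - 36 * ξ) * u ^ 2 - 27 * (2 * ξ - 1) * (ξ - 1) ^ 2 * u

lemma hasDerivAt_cubicChange (ξ x : ℝ) :
    HasDerivAt (cubicChange ξ) (-81 * x ^ 2 + 54 * x - 27 * (1 - ξ) / 2) x := by
  have h := (((hasDerivAt_pow 3 x).const_mul (-27 : ℝ)).add
    ((hasDerivAt_pow 2 x).const_mul (27 : ℝ))).sub ((hasDerivAt_id' x).const_mul (27 * (1 - ξ) / 2))
  exact h.congr_deriv (by norm_num; ring)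

lemma sq_cubicChange_deriv_mul_octahedralQuintic (ξ x : ℝ) :
    (-81 * x ^ 2 + 54 * x - 27 * (1 - ξ) / 2) ^ 2 * octahedralQuintic ξ x =
      weierstrassCubic ξ (cubicChange ξ x) := by
  unfold octahedralQuintic weierstrassCubic cubicChange
  ring

/-- the cubic change of variable
`Υ = −27X³ + 27X² − (27(1−ξ)/2)X` reduces the hyperelliptic equation
`X'² = 2X(1−ξ−2X+2X²)(2ξ−1+2X−3X²)` to the Weierstrass-type equation
`Υ'² = 4Υ³ + (20−36ξ)Υ² − 27(2ξ−1)(ξ−1)²Υ`. -/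
theorem stmt_11 (ξ : ℝ) (X : ℝ → ℝ) (hX : Differentiable ℝ X)
    (hode : ∀ t : ℝ, (deriv X t) ^ 2 =
      2 * X t * (1 - ξ - 2 * X t + 2 * X t ^ 2) * (2 * ξ - 1 + 2 * X t - 3 * X t ^ 2))
    (Υ : ℝ → ℝ)
    (hΥ : ∀ t : ℝ, Υ t = -27 * X t ^ 3 + 27 * X t ^ 2 - 27 * (1 - ξ) / 2 * X t) :
    ∀ t : ℝ, (deriv Υ t) ^ 2 =
      4 * Υ t ^ 3 + (20 - 36 * ξ) * Υ t ^ 2 - 27 * (2 * ξ - 1) * (ξ - 1) ^ 2 * Υ t := by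
  intro t
  have hΥX : Υ = cubicChange ξ ∘ X := funext hΥ
  have hchain : deriv Υ t = (-81 * X t ^ 2 + 54 * X t - 27 * (1 - ξ) / 2) * deriv X t := by
    rw [hΥX]
    exact ((hasDerivAt_cubicChange ξ (X t)).comp t (hX t).hasDerivAt).deriv
  rw [hchain, mul_pow, hode t, hΥ t]
  exact sq_cubicChange_deriv_mul_octahedralQuintic ξ (X t)
end

section
/- Let a, b ∈ ℝ. Define g₂ = b⁶/3 − 6ab⁴ + (135/4)a²b² − 54a³ and g₃ = −b⁹/27 + ab⁷ − (81/8)a²b⁵ + (369/8)a³b³ − 81a⁴b. Suppose J : ℝ → ℝ is a differentiable function satisfying, for all t, (J'(t))² = 2·J(t)·(a + b·J(t) + 2·J(t)²)·(b²/4 − 2a − b·J(t) − 3·J(t)²). Define ψ̂(t) = −27·J(t)³ − (27b/2)·J(t)² − (27a/2)·J(t) + b³/6 − 3ab/2. Then for all t: (ψ̂'(t))² = 4·ψ̂(t)³ − g₂·ψ̂(t) − g₃. Moreover the discriminant identity g₂³ − 27·g₃² = (729/64)·a⁴·(b²−8a)²·(b²−6a)³ holds. -/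
/-!
The substitution `ψ̂ = P(J)` with the cubic `P(x) = -27x³ - (27b/2)x² - (27a/2)x + b³/6 - 3ab/2`
turns the sextic of the genus-2 curve into the Weierstrass cubic: as polynomials in `x`,
`P'(x)² · f_{a,b}(x) = 4P(x)³ - g₂P(x) - g₃`. By the chain rule `ψ̂'² = P'(J)² J'² = P'(J)² f_{a,b}(J)`,
which gives the Weierstrass equation. The discriminant identity is a polynomial identity in `a, b`.
-/

namespace HyperellipticReduction

theorem deriv_comp_sq_eq_weierstrass {f P P' J : ℝ → ℝ} {g₂ g₃ : ℝ}
    (hJ : Differentiable ℝ J) (hode : ∀ t, deriv J t ^ 2 = f (J t))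
    (hP : ∀ x, HasDerivAt P (P' x) x)
    (hPf : ∀ x, P' x ^ 2 * f x = 4 * P x ^ 3 - g₂ * P x - g₃) (t : ℝ) :
    deriv (P ∘ J) t ^ 2 = 4 * P (J t) ^ 3 - g₂ * P (J t) - g₃ := by
  rw [((hP (J t)).comp t (hJ t).hasDerivAt).deriv, mul_pow, hode, hPf]

noncomputable section

def sextic (a b x : ℝ) : ℝ :=
  2 * x * (a + b * x + 2 * x ^ 2) * (b ^ 2 / 4 - 2 * a - b * x - 3 * x ^ 2)

def cubicChange (a b x : ℝ) : ℝ :=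
  -27 * x ^ 3 - (27 * b / 2) * x ^ 2 - (27 * a / 2) * x + b ^ 3 / 6 - 3 * a * b / 2

def invariantG₂ (a b : ℝ) : ℝ :=
  b ^ 6 / 3 - 6 * a * b ^ 4 + (135 / 4) * a ^ 2 * b ^ 2 - 54 * a ^ 3

def invariantG₃ (a b : ℝ) : ℝ :=
  -b ^ 9 / 27 + a * b ^ 7 - (81 / 8) * a ^ 2 * b ^ 5 + (369 / 8) * a ^ 3 * b ^ 3 - 81 * a ^ 4 * b

theorem hasDerivAt_cubicChange (a b x : ℝ) :
    HasDerivAt (cubicChange a b) (-81 * x ^ 2 - 27 * b * x - 27 * a / 2) x := by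
  have hx := hasDerivAt_id' x
  refine ((((((hx.fun_pow 3).const_mul (-27 : ℝ)).fun_sub
    ((hx.fun_pow 2).const_mul (27 * b / 2))).fun_sub (hx.const_mul (27 * a / 2))).add_const
    (b ^ 3 / 6)).sub_const (3 * a * b / 2)).congr_deriv ?_
  push_cast
  ring

theorem cubicChange_deriv_sq_mul_sextic (a b x : ℝ) :
    (-81 * x ^ 2 - 27 * b * x - 27 * a / 2) ^ 2 * sextic a b x =
      4 * cubicChange a b x ^ 3 - invariantG₂ a b * cubicChange a b x - invariantG₃ a b := by
  simp only [sextic, cubicChange, invariantG₂, invariantG₃]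
  ring

theorem discriminant_invariantG₂_invariantG₃ (a b : ℝ) :
    invariantG₂ a b ^ 3 - 27 * invariantG₃ a b ^ 2 =
      (729 / 64) * a ^ 4 * (b ^ 2 - 8 * a) ^ 2 * (b ^ 2 - 6 * a) ^ 3 := by
  simp only [invariantG₂, invariantG₃]
  ring

end

end HyperellipticReduction

/-- explicit reduction of the genus-2 hyperelliptic equation
`J'² = 2J(a+bJ+2J²)(b²/4−2a−bJ−3J²)` to the Weierstrass equation
`ψ̂'² = 4ψ̂³ − g₂ψ̂ − g₃`, together with the discriminant identity
`g₂³ − 27g₃² = (729/64)a⁴(b²−8a)²(b²−6a)³`. -/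
theorem stmt_12 (a b g₂ g₃ : ℝ)
    (hg₂ : g₂ = b ^ 6 / 3 - 6 * a * b ^ 4 + (135 / 4) * a ^ 2 * b ^ 2 - 54 * a ^ 3)
    (hg₃ : g₃ = -b ^ 9 / 27 + a * b ^ 7 - (81 / 8) * a ^ 2 * b ^ 5
      + (369 / 8) * a ^ 3 * b ^ 3 - 81 * a ^ 4 * b)
    (J : ℝ → ℝ) (hJ : Differentiable ℝ J)
    (hode : ∀ t : ℝ, (deriv J t) ^ 2 =
      2 * J t * (a + b * J t + 2 * J t ^ 2) * (b ^ 2 / 4 - 2 * a - b * J t - 3 * J t ^ 2))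
    (ψ : ℝ → ℝ)
    (hψ : ∀ t : ℝ, ψ t = -27 * J t ^ 3 - (27 * b / 2) * J t ^ 2 - (27 * a / 2) * J t
      + b ^ 3 / 6 - 3 * a * b / 2) :
    (∀ t : ℝ, (deriv ψ t) ^ 2 = 4 * ψ t ^ 3 - g₂ * ψ t - g₃) ∧
    g₂ ^ 3 - 27 * g₃ ^ 2 = (729 / 64) * a ^ 4 * (b ^ 2 - 8 * a) ^ 2 * (b ^ 2 - 6 * a) ^ 3 := by
  open HyperellipticReduction in
  have hψJ : ψ = cubicChange a b ∘ J := funext hψ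
  have hg₂' : g₂ = invariantG₂ a b := hg₂
  have hg₃' : g₃ = invariantG₃ a b := hg₃
  subst hψJ hg₂' hg₃'
  exact ⟨deriv_comp_sq_eq_weierstrass hJ hode (hasDerivAt_cubicChange a b)
    (cubicChange_deriv_sq_mul_sextic a b), discriminant_invariantG₂_invariantG₃ a b⟩
end

section
/- Let n ≥ 3 be an odd natural number. Define ϖ₁(x₁,…,x_n) = (Π_{j=2}^{n} x_j) · Π_{2 ≤ i < j ≤ n} (x_i² − x_j²), and for 1 ≤ k ≤ n define ϖ_k by the cyclic shift ϖ_k(x₁,…,x_n) = ϖ₁(x_k, x_{k+1}, …, x_n, x₁, …, x_{k−1}). Then: (i) the vector field 𝐎_n = (ϖ₁,…,ϖ_n) is solenoidal, i.e. Σ_{k=1}^{n} (∂ϖ_k/∂x_k)(x) = 0 for all x ∈ ℝⁿ; and (ii) for every integer s with 1 ≤ s ≤ n−1, the form Σ_{j=1}^{n} x_j^{2s} is a first integral of 𝐎_n, i.e. Σ_{k=1}^{n} x_k^{2s−1} · ϖ_k(x) = 0 for all x ∈ ℝⁿ. -/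
/-! `ϖ_k` is, up to a constant independent of `k`, the signed `k`-th cofactor
`(-1)^k · det (x_j^{2i+1})_{0 ≤ i ≤ n-2, j ≠ k}` of an odd-power Vandermonde matrix, so
`Σ_k x_k^{2s-1} ϖ_k` is the Laplace expansion of a determinant with two equal rows.
The sign `(-1)^k` comes from cyclically rotating the `n - 1` remaining variables `k` times,
which is where `n` odd is needed. Solenoidality is immediate: `ϖ_k` does not involve `x_k`. -/

open Finset Matrix Equiv Function
open Fin.NatCast

theorem Fin.prod_filter_ne_zero {M : Type*} [CommMonoid M] {m : ℕ} (f : Fin (m + 1) → M) :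
    ∏ j ∈ univ.filter (· ≠ 0), f j = ∏ j : Fin m, f j.succ := by
  rw [prod_filter, Fin.prod_univ_succ]
  simp [Fin.succ_ne_zero]

theorem Fin.prod_filter_pairs_ne_zero_lt {M : Type*} [CommMonoid M] {m : ℕ}
    (f : Fin (m + 1) → Fin (m + 1) → M) :
    ∏ p ∈ univ.filter
        (fun p : Fin (m + 1) × Fin (m + 1) => p.1 ≠ 0 ∧ p.2 ≠ 0 ∧ p.1 < p.2),
      f p.1 p.2 = ∏ i : Fin m, ∏ j ∈ Ioi i, f i.succ j.succ := by
  rw [prod_filter, Fintype.prod_prod_type, Fin.prod_univ_succ]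
  simp only [Fin.prod_univ_succ, ne_eq, not_true_eq_false, false_and, if_false, prod_const_one,
    one_mul, Fin.succ_ne_zero, not_false_eq_true, true_and, Fin.succ_lt_succ_iff]
  refine prod_congr rfl fun i _ => ?_
  rw [← prod_filter, filter_lt_eq_Ioi]

theorem finRotate_pow_apply (m t : ℕ) (j : Fin (m + 1)) :
    (finRotate (m + 1) ^ t) j = j + t := by
  induction t with
  | zero => simp
  | succ t ih => rw [pow_succ', Perm.mul_apply, ih, finRotate_apply, Nat.cast_succ, add_assoc]

theorem Fin.succAbove_add_natCast {m : ℕ} (k : Fin (m + 2)) (j : Fin (m + 1)) :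
    k.succAbove (j + (k : ℕ)) = j.succ + k := by
  have hk := k.isLt
  have hj := j.isLt
  rcases lt_or_ge ((j : ℕ) + k) (m + 1) with h | h
  · have hval : ((j + (k : ℕ) : Fin (m + 1)) : ℕ) = j + k := by
      rw [Fin.val_add, Fin.val_natCast, Nat.add_mod_mod, Nat.mod_eq_of_lt h]
    rw [Fin.succAbove_of_le_castSucc _ _ (by rw [Fin.le_def, Fin.val_castSucc, hval]; omega)]
    ext
    rw [Fin.val_succ, hval, Fin.val_add, Fin.val_succ, Nat.mod_eq_of_lt (by omega)]
    omega
  · have hval : ((j + (k : ℕ) : Fin (m + 1)) : ℕ) = j + k - (m + 1) := by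
      rw [Fin.val_add, Fin.val_natCast, Nat.add_mod_mod, Nat.mod_eq_sub_mod h,
        Nat.mod_eq_of_lt (by omega)]
    rw [Fin.succAbove_of_castSucc_lt _ _ (by rw [Fin.lt_def, Fin.val_castSucc, hval]; omega)]
    ext
    rw [Fin.val_castSucc, hval, Fin.val_add, Fin.val_succ, Nat.mod_eq_sub_mod (by omega),
      Nat.mod_eq_of_lt (by omega)]
    omega

theorem sign_finRotate_pow_of_odd {m : ℕ} (hm : Odd m) (t : ℕ) :
    Perm.sign (finRotate (m + 1) ^ t) = (-1) ^ t := by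
  rw [map_pow, sign_finRotate, Nat.add_sub_cancel, hm.neg_one_pow]

section OddVandermonde

variable {R : Type*} [CommRing R] {m : ℕ}

def oddPowMatrix (y : Fin m → R) : Matrix (Fin m) (Fin m) R :=
  Matrix.of fun i j => y j ^ (2 * (i : ℕ) + 1)

def oddVandermonde (y : Fin m → R) : R :=
  (∏ j, y j) * ∏ i, ∏ j ∈ Ioi i, (y i ^ 2 - y j ^ 2)

theorem oddVandermonde_eq_det (y : Fin m → R) :
    oddVandermonde y = (∏ i : Fin m, ∏ _j ∈ Ioi i, (-1 : R)) * (oddPowMatrix y).det := by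
  have hV : oddPowMatrix y =
      Matrix.of fun i j => y j * (vandermonde fun j => y j ^ 2)ᵀ i j := by
    ext i j
    simp only [oddPowMatrix, of_apply, transpose_apply, vandermonde_apply]
    ring
  rw [hV, det_mul_row, det_transpose, det_vandermonde, oddVandermonde]
  simp only [← prod_mul_distrib]
  refine prod_congr rfl fun i _ => ?_
  rw [mul_left_comm, ← prod_mul_distrib]
  exact congrArg _ (prod_congr rfl fun j _ => by ring)

theorem oddVandermonde_comp_perm (y : Fin m → R) (σ : Perm (Fin m)) :
    oddVandermonde (y ∘ σ) = Perm.sign σ * oddVandermonde y := by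
  rw [oddVandermonde_eq_det, oddVandermonde_eq_det, mul_left_comm]
  exact congrArg _ (det_permute' σ (oddPowMatrix y))

theorem oddVandermonde_succ_add_of_odd (hm : Odd m) (x : Fin (m + 2) → R)
    (k : Fin (m + 2)) :
    (oddVandermonde fun j => x (j.succ + k)) =
      (-1) ^ (k : ℕ) * oddVandermonde (x ∘ k.succAbove) := by
  have hrot : (fun j => x (j.succ + k)) = x ∘ k.succAbove ∘ (finRotate (m + 1) ^ (k : ℕ)) := by
    funext j
    simp only [Function.comp_apply, finRotate_pow_apply, Fin.succAbove_add_natCast]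
  rw [hrot, ← comp_assoc, oddVandermonde_comp_perm, sign_finRotate_pow_of_odd hm]
  push_cast
  rfl

theorem sum_neg_one_pow_mul_oddVandermonde_succAbove (x : Fin (m + 1) → R) (i : Fin m) :
    ∑ k : Fin (m + 1), (-1) ^ (k : ℕ) * x k ^ (2 * (i : ℕ) + 1) *
      oddVandermonde (x ∘ k.succAbove) = 0 := by
  let B : Matrix (Fin (m + 1)) (Fin (m + 1)) R := Matrix.of
    (Fin.cons (fun j => x j ^ (2 * (i : ℕ) + 1)) fun i j => x j ^ (2 * (i : ℕ) + 1))
  have hB : ∑ k : Fin (m + 1), (-1) ^ (k : ℕ) * x k ^ (2 * (i : ℕ) + 1) *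
      (oddPowMatrix (x ∘ k.succAbove)).det = 0 := by
    rw [← det_zero_of_row_eq (M := B) (Fin.succ_ne_zero i).symm rfl]
    exact (det_succ_row_zero B).symm
  simp only [oddVandermonde_eq_det, mul_left_comm _ (∏ i : Fin m, _), ← mul_sum, hB, mul_zero]

theorem differentiable_oddVandermonde {𝕜 : Type*} [NontriviallyNormedField 𝕜] :
    Differentiable 𝕜 (oddVandermonde : (Fin m → 𝕜) → 𝕜) := by
  unfold oddVandermonde
  fun_prop

end OddVandermonde

theorem fderiv_apply_single_eq_zero_of_update_eq {𝕜 ι F : Type*} [NontriviallyNormedField 𝕜]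
    [Fintype ι] [DecidableEq ι] [NormedAddCommGroup F] [NormedSpace 𝕜 F]
    {f : (ι → 𝕜) → F} {x : ι → 𝕜} {k : ι}
    (hf : DifferentiableAt 𝕜 f x) (hk : ∀ t, f (update x k t) = f x) :
    fderiv 𝕜 f x (Pi.single k 1) = 0 := by
  rw [← hf.lineDeriv_eq_fderiv, lineDeriv]
  have hline : (fun t : 𝕜 => f (x + t • Pi.single k 1)) = fun _ => f x := by
    funext t
    rw [← hk (x k + t)]
    congr 1
    ext i
    rcases eq_or_ne i k with rfl | h <;> simp [*]
  rw [hline, deriv_const]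

/-- the hyperoctahedral vector field `𝐎ₙ` (odd `n ≥ 3`), whose
`k`-th coordinate is the cyclic shift
`ϖ_k(x) = (∏_{j≠k} x_{j+k})·∏_{0<i<j<n}(x_{i+k}² − x_{j+k}²)` (0-based indices,
`k = 0` giving `ϖ₁`), is solenoidal, and each form `Σⱼ x_j^{2s}`,
`1 ≤ s ≤ n−1`, is a first integral of `𝐎ₙ`. -/
theorem stmt_15 (n : ℕ) (hn : 3 ≤ n) (hodd : Odd n)
    (ϖ : Fin n → (Fin n → ℝ) → ℝ)
    (hϖ : ∀ (k : Fin n) (x : Fin n → ℝ),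
      ϖ k x =
        (∏ j ∈ Finset.univ.filter (fun j : Fin n => j ≠ ⟨0, by omega⟩), x (j + k)) *
        ∏ p ∈ Finset.univ.filter
          (fun p : Fin n × Fin n =>
            p.1 ≠ ⟨0, by omega⟩ ∧ p.2 ≠ ⟨0, by omega⟩ ∧ p.1 < p.2),
          ((x (p.1 + k)) ^ 2 - (x (p.2 + k)) ^ 2)) :
    (∀ x : Fin n → ℝ, ∑ k, fderiv ℝ (ϖ k) x (Pi.single k 1) = 0) ∧
    (∀ s : ℕ, 1 ≤ s → s ≤ n - 1 →
      ∀ x : Fin n → ℝ, ∑ k, x k ^ (2 * s - 1) * ϖ k x = 0) := by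
  obtain ⟨m, rfl⟩ : ∃ m, n = m + 2 := ⟨n - 2, by omega⟩
  have hm : Odd m := by simpa [Nat.odd_add] using hodd
  have hϖ_shift : ∀ k x, ϖ k x = oddVandermonde fun j => x (j.succ + k) := by
    intro k x
    rw [hϖ, Fin.mk_zero', Fin.prod_filter_ne_zero,
      Fin.prod_filter_pairs_ne_zero_lt fun a b => x (a + k) ^ 2 - x (b + k) ^ 2]
    rfl
  refine ⟨fun x => sum_eq_zero fun k _ =>
    fderiv_apply_single_eq_zero_of_update_eq ?_ fun t => ?_, fun s hs1 hs2 x => ?_⟩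
  · rw [show ϖ k = _ from funext (hϖ_shift k)]
    exact ((differentiable_oddVandermonde (𝕜 := ℝ)).comp (by fun_prop)).differentiableAt
  · simp only [hϖ_shift, update_of_ne (add_ne_right.2 (Fin.succ_ne_zero _))]
  · rw [show 2 * s - 1 = 2 * (s - 1) + 1 by omega,
      ← sum_neg_one_pow_mul_oddVandermonde_succAbove x ⟨s - 1, by omega⟩]
    refine sum_congr rfl fun k _ => ?_
    rw [hϖ_shift, oddVandermonde_succ_add_of_odd hm]
    ring
end

section
/- Consider the function G(x,y,z) = (y³z − yz³)² + (z³x − zx³)² + (x³y − xy³)² on the unit sphere {(x,y,z) ∈ ℝ³ : x² + y² + z² = 1}. Then the supremum of G over the unit sphere equals (827 + 73·√73)/18432, and it is attained; that is, (827 + 73√73)/18432 is the greatest element of the set { G(x,y,z) : x² + y² + z² = 1 }. Equivalently, the maximal length α_∞ of the octahedral vector field 𝐂̃ = (y³z−yz³, z³x−zx³, x³y−xy³) on the unit sphere equals √(827 + 73√73)/(96√2). -/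
set_option maxHeartbeats 2000000

private lemma key_sorted (u a b : ℝ) (hu : u^2 = 73) (hu85 : 8.5 ≤ u)
    (ha : 0 ≤ a) (h2 : 0 ≤ b - a) (h3 : 0 ≤ 1 - a - b - b) :
    a*b*(a-b)^2 + b*(1-a-b)*(b-(1-a-b))^2 + (1-a-b)*a*((1-a-b)-a)^2
      ≤ (827 + 73*u)/18432 := by
  have t1 : 0 ≤ (25/96 + 85/672*u) * ((a-b)^2 * (a*a)) :=
    mul_nonneg (by linarith) (by positivity)
  have t2 : 0 ≤ (19/56 + 1/56*u) * ((a-b)^2 * ((b-a)*(b-a))) :=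
    mul_nonneg (by linarith) (mul_nonneg (sq_nonneg _) (mul_nonneg h2 h2))
  have t3 : 0 ≤ (1/64512 + 1/9216*u) * ((48*a-13+u)^2 * (a*(b-a))) :=
    mul_nonneg (by linarith) (mul_nonneg (sq_nonneg _) (mul_nonneg ha h2))
  have t4 : 0 ≤ (563/774144 + 23/774144*u) * ((48*a-13+u)^2 * ((b-a)*(1-a-b-b))) :=
    mul_nonneg (by linarith) (mul_nonneg (sq_nonneg _) (mul_nonneg h2 h3))
  have t5 : 0 ≤ (11/110592 + 71/774144*u) * ((48*a-13+u)^2 * ((1-a-b-b)*(1-a-b-b))) :=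
    mul_nonneg (by linarith) (mul_nonneg (sq_nonneg _) (mul_nonneg h3 h3))
  have t6 : 0 ≤ (-83/774144 + 97/774144*u) * ((48*b-13+u)^2 * ((b-a)*(1-a-b-b))) :=
    mul_nonneg (by linarith) (mul_nonneg (sq_nonneg _) (mul_nonneg h2 h3))
  have t7 : 0 ≤ (11/110592 + 71/774144*u) * ((48*b-13+u)^2 * ((1-a-b-b)*(1-a-b-b))) :=
    mul_nonneg (by linarith) (mul_nonneg (sq_nonneg _) (mul_nonneg h3 h3))
  have t8 : 0 ≤ (35/73728 + 1/73728*u) * ((24*(1-a-b)-11-u)^2) :=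
    mul_nonneg (by linarith) (sq_nonneg _)
  have t9 : 0 ≤ (-85/18432 + 71/129024*u) * ((24*(1-a-b)-11-u)^2 * (a*(1-a-b-b))) :=
    mul_nonneg (by linarith) (mul_nonneg (sq_nonneg _) (mul_nonneg ha h3))
  have t10 : 0 ≤ (-11/96768 + 1/13824*u) * ((24*(1-a-b)-11-u)^2 * (b-a)) :=
    mul_nonneg (by linarith) (mul_nonneg (sq_nonneg _) h2)
  have t11 : 0 ≤ (-1/512 + 1/4032*u) * ((24*(1-a-b)-11-u)^2 * ((b-a)*(1-a-b-b))) :=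
    mul_nonneg (by linarith) (mul_nonneg (sq_nonneg _) (mul_nonneg h2 h3))
  have t12 : 0 ≤ (73/55296 + 13/387072*u) * ((24*(1-a-b)-11-u)^2 * (1-a-b-b)) :=
    mul_nonneg (by linarith) (mul_nonneg (sq_nonneg _) h3)
  have key : (827 + 73*u)/18432
      - (a*b*(a-b)^2 + b*(1-a-b)*(b-(1-a-b))^2 + (1-a-b)*a*((1-a-b)-a)^2)
      = (25/96 + 85/672*u) * ((a-b)^2 * (a*a))
      + (19/56 + 1/56*u) * ((a-b)^2 * ((b-a)*(b-a)))
      + (1/64512 + 1/9216*u) * ((48*a-13+u)^2 * (a*(b-a)))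
      + (563/774144 + 23/774144*u) * ((48*a-13+u)^2 * ((b-a)*(1-a-b-b)))
      + (11/110592 + 71/774144*u) * ((48*a-13+u)^2 * ((1-a-b-b)*(1-a-b-b)))
      + (-83/774144 + 97/774144*u) * ((48*b-13+u)^2 * ((b-a)*(1-a-b-b)))
      + (11/110592 + 71/774144*u) * ((48*b-13+u)^2 * ((1-a-b-b)*(1-a-b-b)))
      + (35/73728 + 1/73728*u) * ((24*(1-a-b)-11-u)^2)
      + (-85/18432 + 71/129024*u) * ((24*(1-a-b)-11-u)^2 * (a*(1-a-b-b)))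
      + (-11/96768 + 1/13824*u) * ((24*(1-a-b)-11-u)^2 * (b-a))
      + (-1/512 + 1/4032*u) * ((24*(1-a-b)-11-u)^2 * ((b-a)*(1-a-b-b)))
      + (73/55296 + 13/387072*u) * ((24*(1-a-b)-11-u)^2 * (1-a-b-b)) := by
    linear_combination (-((-295/73728:ℝ) + (17/73728:ℝ)*u + (15/1024:ℝ)*b - (1/3072:ℝ)*b*u
      - (551/96768:ℝ)*b^2 - (1/13824:ℝ)*b^2*u - (17/1344:ℝ)*b^3 + (15/1024:ℝ)*a
      - (1/3072:ℝ)*a*u - (1717/48384:ℝ)*a*b + (1/6912:ℝ)*a*b*u + (97/8064:ℝ)*a*b^2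
      - (551/96768:ℝ)*a^2 - (1/13824:ℝ)*a^2*u + (1/72:ℝ)*a^2*b - (107/8064:ℝ)*a^3)) * hu
  linarith

private lemma key3 (u a b c : ℝ) (hu : u^2 = 73) (hu85 : 8.5 ≤ u)
    (ha : 0 ≤ a) (hb : 0 ≤ b) (hc : 0 ≤ c) (habc : a + b + c = 1) :
    a*b*(a-b)^2 + b*c*(b-c)^2 + c*a*(c-a)^2 ≤ (827 + 73*u)/18432 := by
  have sorted : ∀ p q r : ℝ, 0 ≤ p → p ≤ q → q ≤ r → p + q + r = 1 →
      p*q*(p-q)^2 + q*r*(q-r)^2 + r*p*(r-p)^2 ≤ (827 + 73*u)/18432 := by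
    intro p q r hp hpq hqr hpqr
    have hr : r = 1 - p - q := by linarith
    subst hr
    have := key_sorted u p q hu hu85 hp (by linarith) (by linarith)
    linarith
  rcases le_total a b with hab|hab
  · rcases le_total b c with hbc|hbc
    · linarith [sorted a b c ha hab hbc habc]
    · rcases le_total a c with hac|hac
      · linarith [sorted a c b ha hac hbc (by linarith)]
      · linarith [sorted c a b hc hac hab (by linarith)]
  · rcases le_total a c with hac|hac
    · linarith [sorted b a c hb hab hac (by linarith)]
    · rcases le_total b c with hbc|hbc
      · linarith [sorted b c a hb hbc hac (by linarith)]
      · linarith [sorted c b a hc hbc hab (by linarith)]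

/-- the squared length `G = |𝐂̃|²` of the octahedral vector field
`𝐂̃ = (y³z−yz³, z³x−zx³, x³y−xy³)` attains its maximum `(827 + 73√73)/18432` on
the unit sphere; equivalently `α_∞ = √(827+73√73)/(96√2)`. -/
theorem stmt_16 (G : ℝ → ℝ → ℝ → ℝ)
    (hG : ∀ x y z : ℝ, G x y z =
      (y ^ 3 * z - y * z ^ 3) ^ 2 + (z ^ 3 * x - z * x ^ 3) ^ 2
        + (x ^ 3 * y - x * y ^ 3) ^ 2) :
    IsGreatest {v : ℝ | ∃ x y z : ℝ, x ^ 2 + y ^ 2 + z ^ 2 = 1 ∧ v = G x y z}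
      ((827 + 73 * Real.sqrt 73) / 18432) ∧
    Real.sqrt ((827 + 73 * Real.sqrt 73) / 18432)
      = Real.sqrt (827 + 73 * Real.sqrt 73) / (96 * Real.sqrt 2) := by
  set u := Real.sqrt 73 with hudef
  have hu : u^2 = 73 := Real.sq_sqrt (by norm_num)
  have hu0 : 0 ≤ u := Real.sqrt_nonneg _
  have hu85 : 8.5 ≤ u := by nlinarith
  have hu9 : u ≤ 9 := by nlinarith
  refine ⟨⟨?_, ?_⟩, ?_⟩
  · -- membership
    have hs : (0:ℝ) ≤ (13 - u)/48 := by linarith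
    have ht : (0:ℝ) ≤ (11 + u)/24 := by linarith
    refine ⟨Real.sqrt ((13-u)/48), Real.sqrt ((13-u)/48), Real.sqrt ((11+u)/24), ?_, ?_⟩
    · rw [Real.sq_sqrt hs, Real.sq_sqrt ht]; ring
    · rw [hG]
      have e : ∀ X Z : ℝ,
          (X ^ 3 * Z - X * Z ^ 3) ^ 2 + (Z ^ 3 * X - Z * X ^ 3) ^ 2
            + (X ^ 3 * X - X * X ^ 3) ^ 2
          = 2 * ((X^2) * (Z^2) * ((X^2) - (Z^2))^2) := by intro X Z; ring
      rw [e, Real.sq_sqrt hs, Real.sq_sqrt ht]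
      linear_combination ((-73/147456 : ℝ) + (1/36864:ℝ)*u + (1/147456:ℝ)*u^2) * hu
  · -- upper bound
    rintro v ⟨x, y, z, hxyz, rfl⟩
    rw [hG]
    have := key3 u (x^2) (y^2) (z^2) hu hu85 (sq_nonneg x) (sq_nonneg y) (sq_nonneg z) hxyz
    nlinarith [this]
  · -- sqrt identity
    have h2 : Real.sqrt ((827 + 73*u)/18432) = Real.sqrt (827 + 73*u) / Real.sqrt 18432 :=
      Real.sqrt_div (by positivity) 18432
    have h3 : Real.sqrt 18432 = 96 * Real.sqrt 2 := by
      rw [show (18432:ℝ) = 96^2 * 2 by norm_num, Real.sqrt_mul (by positivity),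
        Real.sqrt_sq (by norm_num)]
    rw [h2, h3]
end

section
/- For real numbers a, b, c, d let F(x,y) = a·x³ + b·x²y + c·xy² + d·y³, and define M(F) = sup { F(x,y)² : x² + y² = 1 } and I(F) = (1/(2π))·∫₀^{2π} F(cos θ, sin θ)² dθ. Then for every such F: (2 − 2√6/9)·I(F) ≤ M(F) ≤ 4·I(F). Moreover both constants are optimal: M(F) = 4·I(F) holds for F(x,y) = x³ − xy², and M(F) = (2 − 2√6/9)·I(F) holds for F(x,y) = (3√6 − 2)·x³ + (12 − 3√6)·xy² + 2√5·y³. Equivalently, for the space of 4-homogeneous vector fields (yF, −xF) on the unit circle, the extremal ratios of squared maximal length to mean squared length are Υ(2,4) = 4 and Ξ(2,4) = 2 − 2√6/9. -/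
/-!
On the unit circle `F(cos θ, sin θ) = p cos θ + q sin θ + r cos 3θ + s sin 3θ` is the sum of a
first and a third harmonic, and `I(F) = (p² + q² + r² + s²)/2`. The upper bound is
Cauchy–Schwarz for each harmonic together with `(X + Y)² ≤ 2X² + 2Y²`.

For the lower bound rotate so that the first harmonic becomes `A cos φ` with `A ≥ 0`, and reflect
so that the third harmonic `u cos 3φ + v sin 3φ` has `v ≥ 0`. If the third harmonic is large
compared with `A`, take `3φ` to be its phase with `|φ| ≤ π/3`, so that `cos φ ≥ 1/2`; otherwise
take `φ = 0` when `u ≥ 0`, `φ = π/6` when `A ≥ 6|u|`, and else the critical point of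
`A cos φ + u cos 3φ`. There the bound reduces to `(27 - 3√6) B (A² + B²) ≤ (A + 3B)³` for
`B = -u`, whose equality case `3B = (3 - √6) A` produces the extremal form.
-/

open Real

def cubicForm (a b c d x y : ℝ) : ℝ := a * x ^ 3 + b * x ^ 2 * y + c * x * y ^ 2 + d * y ^ 3

noncomputable def cubicMeanSq (a b c d : ℝ) : ℝ :=
  (5 * a ^ 2 + b ^ 2 + c ^ 2 + 5 * d ^ 2 + 2 * a * c + 2 * b * d) / 16

lemma integral_cos_sq_two_pi : ∫ θ in (0 : ℝ)..2 * π, cos θ ^ 2 = π := by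
  simp

lemma integral_cos_pow_four_two_pi : ∫ θ in (0 : ℝ)..2 * π, cos θ ^ 4 = 3 * π / 4 := by
  rw [integral_cos_pow (n := 2), integral_cos_sq_two_pi]; norm_num; ring

lemma integral_cos_pow_six_two_pi : ∫ θ in (0 : ℝ)..2 * π, cos θ ^ 6 = 5 * π / 8 := by
  rw [integral_cos_pow (n := 4), integral_cos_pow_four_two_pi]; norm_num; ring

lemma integral_sin_mul_comp_cos_two_pi (g : ℝ → ℝ) :
    ∫ θ in (0 : ℝ)..2 * π, sin θ * g (cos θ) = 0 := by
  have h := intervalIntegral.integral_comp_sub_left (fun θ => sin θ * g (cos θ)) (2 * π)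
    (a := 0) (b := 2 * π)
  simp only [sin_two_pi_sub, cos_two_pi_sub, neg_mul, intervalIntegral.integral_neg, sub_self,
    sub_zero] at h
  linarith

lemma cubicForm_cos_sin_sq (a b c d θ : ℝ) :
    cubicForm a b c d (cos θ) (sin θ) ^ 2
      = (d ^ 2 + (c ^ 2 + 2 * b * d - 3 * d ^ 2) * cos θ ^ 2
          + (b ^ 2 + 2 * a * c - 2 * c ^ 2 - 4 * b * d + 3 * d ^ 2) * cos θ ^ 4
          + (a ^ 2 - b ^ 2 - 2 * a * c + c ^ 2 + 2 * b * d - d ^ 2) * cos θ ^ 6)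
        + sin θ * (2 * c * d * cos θ + (2 * a * d + 2 * b * c - 4 * c * d) * cos θ ^ 3
          + (2 * a * b - 2 * a * d - 2 * b * c + 2 * c * d) * cos θ ^ 5) := by
  have h := sin_sq_add_cos_sq θ
  set C := cos θ
  set S := sin θ
  unfold cubicForm
  linear_combination (d ^ 2 + S ^ 2 * d ^ 2 + S ^ 4 * d ^ 2 + 2 * C * S * c * d
    + 2 * C * S ^ 3 * c * d - 2 * C ^ 2 * d ^ 2 + C ^ 2 * c ^ 2 + 2 * C ^ 2 * b * d
    - C ^ 2 * S ^ 2 * d ^ 2 + C ^ 2 * S ^ 2 * c ^ 2 + 2 * C ^ 2 * S ^ 2 * b * d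
    - 2 * C ^ 3 * S * c * d + 2 * C ^ 3 * S * b * c + 2 * C ^ 3 * S * a * d + C ^ 4 * d ^ 2
    - C ^ 4 * c ^ 2 - 2 * C ^ 4 * b * d + C ^ 4 * b ^ 2 + 2 * C ^ 4 * a * c) * h

lemma integral_cubicForm_cos_sin_sq (a b c d : ℝ) :
    ∫ θ in (0 : ℝ)..2 * π, cubicForm a b c d (cos θ) (sin θ) ^ 2
      = 2 * π * cubicMeanSq a b c d := by
  simp_rw [cubicForm_cos_sin_sq]
  rw [intervalIntegral.integral_add (by apply Continuous.intervalIntegrable; fun_prop)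
      (by apply Continuous.intervalIntegrable; fun_prop),
    integral_sin_mul_comp_cos_two_pi (fun C => 2 * c * d * C
      + (2 * a * d + 2 * b * c - 4 * c * d) * C ^ 3
      + (2 * a * b - 2 * a * d - 2 * b * c + 2 * c * d) * C ^ 5)]
  simp (disch := apply Continuous.intervalIntegrable; fun_prop) only
    [intervalIntegral.integral_add, intervalIntegral.integral_const_mul,
      intervalIntegral.integral_const, smul_eq_mul, sub_zero, add_zero, integral_cos_sq_two_pi,
      integral_cos_pow_four_two_pi, integral_cos_pow_six_two_pi]
  unfold cubicMeanSq
  ring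

lemma cubicForm_eq_harmonics (a b c d : ℝ) {x y : ℝ} (h : x ^ 2 + y ^ 2 = 1) :
    cubicForm a b c d x y = (3 * a + c) / 4 * x + (b + 3 * d) / 4 * y
      + ((a - c) / 4 * (4 * x ^ 3 - 3 * x) + (b - d) / 4 * (3 * y - 4 * y ^ 3)) := by
  unfold cubicForm
  linear_combination (c * x + b * y) * h

lemma cubicMeanSq_eq_harmonics (a b c d : ℝ) :
    cubicMeanSq a b c d = (((3 * a + c) / 4) ^ 2 + ((b + 3 * d) / 4) ^ 2
      + ((a - c) / 4) ^ 2 + ((b - d) / 4) ^ 2) / 2 := by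
  unfold cubicMeanSq
  ring

lemma sq_mul_add_mul_le {p q x y : ℝ} (h : x ^ 2 + y ^ 2 = 1) :
    (p * x + q * y) ^ 2 ≤ p ^ 2 + q ^ 2 := by
  nlinarith [sq_nonneg (p * y - q * x)]

lemma cubicForm_sq_le (a b c d : ℝ) {x y : ℝ} (h : x ^ 2 + y ^ 2 = 1) :
    cubicForm a b c d x y ^ 2 ≤ 4 * cubicMeanSq a b c d := by
  have h3 : (4 * x ^ 3 - 3 * x) ^ 2 + (3 * y - 4 * y ^ 3) ^ 2 = 1 := by
    linear_combination
      (1 - 8 * y ^ 2 + 16 * y ^ 4 - 8 * x ^ 2 - 16 * x ^ 2 * y ^ 2 + 16 * x ^ 4) * h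
  rw [cubicForm_eq_harmonics a b c d h, cubicMeanSq_eq_harmonics]
  nlinarith [sq_mul_add_mul_le (p := (3 * a + c) / 4) (q := (b + 3 * d) / 4) h,
    sq_mul_add_mul_le (p := (a - c) / 4) (q := (b - d) / 4) h3,
    sq_nonneg ((3 * a + c) / 4 * x + (b + 3 * d) / 4 * y
      - ((a - c) / 4 * (4 * x ^ 3 - 3 * x) + (b - d) / 4 * (3 * y - 4 * y ^ 3)))]

lemma sqrt_six_gt : (2.44 : ℝ) < √6 :=
  (lt_sqrt (by norm_num)).2 (by norm_num)

lemma exists_polar (u v : ℝ) :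
    ∃ β, |β| ≤ π ∧ u = √(u ^ 2 + v ^ 2) * cos β ∧ v = √(u ^ 2 + v ^ 2) * sin β := by
  have hz : ‖(⟨u, v⟩ : ℂ)‖ = √(u ^ 2 + v ^ 2) := by
    rw [Complex.norm_def, Complex.normSq_mk]
    ring_nf
  refine ⟨Complex.arg ⟨u, v⟩, Complex.abs_arg_le_pi _, ?_, ?_⟩
  · rw [← hz, Complex.norm_mul_cos_arg]
  · rw [← hz, Complex.norm_mul_sin_arg]

lemma mul_sq_add_sq_le_pow_three {A B : ℝ} (hA : 0 ≤ A) (hB : 0 ≤ B) :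
    (27 - 3 * √6) * B * (A ^ 2 + B ^ 2) ≤ (A + 3 * B) ^ 3 := by
  have h6 : √6 ^ 2 = 6 := sq_sqrt (by norm_num)
  have hfactor : 18 * ((A + 3 * B) ^ 3 - (27 - 3 * √6) * B * (A ^ 2 + B ^ 2))
      = √6 * (3 * B - (3 - √6) * A) ^ 2 * (6 * B + (5 * √6 + 12) * A) := by
    linear_combination (-81 * A * B ^ 2 + 54 * A ^ 2 * B - 36 * A ^ 2 * B * √6 - 3 * A ^ 3
      + 18 * A ^ 3 * √6 - 5 * A ^ 3 * √6 ^ 2) * h6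
  have : 0 ≤ √6 * (3 * B - (3 - √6) * A) ^ 2 * (6 * B + (5 * √6 + 12) * A) := by positivity
  linarith

-- `12 B x² = A + 3B` says that `x = cos φ` is a critical point of `A cos φ - B cos 3φ`.
lemma sq_ge_at_critical_point {A B v x y : ℝ} (hB : 0 < B) (hv : 0 ≤ v) (hA6 : A ≤ 6 * B)
    (hBA : 2 * B ≤ A) (hvA : 2 * v ≤ A) (hx : 0 ≤ x) (hy : 0 ≤ y) (hxy : x ^ 2 + y ^ 2 = 1)
    (hcrit : 12 * B * x ^ 2 = A + 3 * B) :
    (1 - √6 / 9) * (A ^ 2 + B ^ 2 + v ^ 2)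
      ≤ (A * x - B * (4 * x ^ 3 - 3 * x) + v * (3 * y - 4 * y ^ 3)) ^ 2 := by
  have h6 : √6 ^ 2 = 6 := sq_sqrt (by norm_num)
  have h6l := sqrt_six_gt
  have hA : 0 ≤ A := by linarith
  have hG : 9 * B * (A * x - B * (4 * x ^ 3 - 3 * x) + v * (3 * y - 4 * y ^ 3))
      = 6 * B * (A + 3 * B) * x + 3 * A * v * y := by
    linear_combination (3 * v * y - 3 * B * x) * hcrit - 36 * B * v * y * hxy
  have hx2 : 1 / 4 ≤ x ^ 2 := by nlinarith
  have hy2 : 1 / 4 ≤ y ^ 2 := by nlinarith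
  have hxy4 : 1 / 4 ≤ x * y := by nlinarith [mul_nonneg hx hy]
  have hcube := mul_sq_add_sq_le_pow_three hA hB.le
  have hcross : (9 - √6) * B * v ≤ A * (A + 3 * B) := by
    have h1 : 0 ≤ (9 - √6) * B * (A - 2 * v) := mul_nonneg (by nlinarith) (by linarith)
    have h2 : 0 ≤ A * (A - B) := mul_nonneg hA (by linarith)
    nlinarith
  have hsq : 36 * B ^ 2 * (A + 3 * B) ^ 2 * x ^ 2 = 3 * B * (A + 3 * B) ^ 3 := by
    linear_combination 3 * B * (A + 3 * B) ^ 2 * hcrit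
  have hABv : 0 ≤ A * B * v * (A + 3 * B) := by positivity
  have key : 81 * B ^ 2 * ((1 - √6 / 9) * (A ^ 2 + B ^ 2 + v ^ 2))
      ≤ 81 * B ^ 2 * (A * x - B * (4 * x ^ 3 - 3 * x) + v * (3 * y - 4 * y ^ 3)) ^ 2 :=
    calc 81 * B ^ 2 * ((1 - √6 / 9) * (A ^ 2 + B ^ 2 + v ^ 2))
        = 3 * B * ((27 - 3 * √6) * B * (A ^ 2 + B ^ 2)) + 9 * B * v * ((9 - √6) * B * v) := by
          ring
      _ ≤ 3 * B * (A + 3 * B) ^ 3 + 9 * B * v * (A * (A + 3 * B)) := by gcongr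
      _ ≤ 36 * B ^ 2 * (A + 3 * B) ^ 2 * x ^ 2 + 36 * A * B * (A + 3 * B) * v * (x * y) := by
          rw [hsq]
          nlinarith
      _ ≤ (6 * B * (A + 3 * B) * x + 3 * A * v * y) ^ 2 := by
          nlinarith [sq_nonneg (3 * A * v * y)]
      _ = _ := by
          rw [← hG]
          ring
  exact le_of_mul_le_mul_left key (by positivity)

lemma exists_sq_ge_at_critical_point {A B v : ℝ} (hB : 0 < B) (hv : 0 ≤ v) (hA6 : A ≤ 6 * B)
    (hBA : 2 * B ≤ A) (hvA : 2 * v ≤ A) :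
    ∃ φ, (1 - √6 / 9) * (A ^ 2 + B ^ 2 + v ^ 2)
      ≤ (A * cos φ - B * cos (3 * φ) + v * sin (3 * φ)) ^ 2 := by
  obtain ⟨x, hx, hcrit⟩ : ∃ x, 0 ≤ x ∧ 12 * B * x ^ 2 = A + 3 * B := by
    refine ⟨√((A + 3 * B) / (12 * B)), sqrt_nonneg _, ?_⟩
    rw [sq_sqrt (div_nonneg (by linarith) (by positivity))]
    field_simp
  have hx1 : x ≤ 1 := by
    have : x ^ 2 ≤ 1 := by nlinarith
    nlinarith
  refine ⟨arccos x, ?_⟩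
  rw [cos_three_mul, sin_three_mul, cos_arccos (by linarith) hx1, sin_arccos]
  exact sq_ge_at_critical_point hB hv hA6 hBA hvA hx (sqrt_nonneg _)
    (by rw [sq_sqrt (by nlinarith)]; ring) hcrit

lemma exists_sq_ge_of_le_sqrt {A u v : ℝ} (hA : 0 ≤ A)
    (h : (3 / 4 - √6 / 9) * A ≤ √(u ^ 2 + v ^ 2)) :
    ∃ φ, (1 - √6 / 9) * (A ^ 2 + u ^ 2 + v ^ 2)
      ≤ (A * cos φ + u * cos (3 * φ) + v * sin (3 * φ)) ^ 2 := by
  obtain ⟨β, hβ, hu, hv⟩ := exists_polar u v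
  set R := √(u ^ 2 + v ^ 2)
  have hR : 0 ≤ R := sqrt_nonneg _
  have hR2 : R ^ 2 = u ^ 2 + v ^ 2 := sq_sqrt (by positivity)
  have hcos : 1 / 2 ≤ cos (β / 3) := by
    rw [← cos_pi_div_three, ← cos_abs (β / 3)]
    refine cos_le_cos_of_nonneg_of_le_pi (abs_nonneg _) (by linarith [pi_pos]) ?_
    rw [abs_div, abs_of_pos (three_pos : (0 : ℝ) < 3)]
    linarith
  have hval : A * cos (β / 3) + u * cos (3 * (β / 3)) + v * sin (3 * (β / 3))
      = A * cos (β / 3) + R := by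
    rw [mul_div_cancel₀ β three_ne_zero, hu, hv]
    linear_combination R * sin_sq_add_cos_sq β
  have hlow : A / 2 + R ≤ A * cos (β / 3) + R := by nlinarith
  refine ⟨β / 3, ?_⟩
  rw [hval]
  calc (1 - √6 / 9) * (A ^ 2 + u ^ 2 + v ^ 2)
      = (A / 2 + R) ^ 2 - (√6 / 9 * R ^ 2 + A * (R - (3 / 4 - √6 / 9) * A)) := by
        linear_combination (-(1 - √6 / 9)) * hR2
    _ ≤ (A / 2 + R) ^ 2 := by
        have : 0 ≤ A * (R - (3 / 4 - √6 / 9) * A) := mul_nonneg hA (by linarith)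
        have : 0 ≤ √6 / 9 * R ^ 2 := by positivity
        linarith
    _ ≤ (A * cos (β / 3) + R) ^ 2 := pow_le_pow_left₀ (by linarith) hlow 2

lemma sq_ge_at_zero {A u v : ℝ} (hu : 0 ≤ u) (hv : 0 ≤ v) (hvA : 2 * v ≤ A) :
    (1 - √6 / 9) * (A ^ 2 + u ^ 2 + v ^ 2) ≤ (A + u) ^ 2 := by
  have h6 := sqrt_six_gt
  nlinarith [mul_nonneg (by linarith : 0 ≤ A) hu]

lemma sq_ge_at_pi_div_six {A B v : ℝ} (hB : 0 ≤ B) (hv : 0 ≤ v) (hBA : 6 * B ≤ A) :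
    (1 - √6 / 9) * (A ^ 2 + B ^ 2 + v ^ 2) ≤ (√3 / 2 * A + v) ^ 2 := by
  have h6 := sqrt_six_gt
  have h3 : √3 ^ 2 = 3 := sq_sqrt (by norm_num)
  have hA : 0 ≤ A := by linarith
  nlinarith [mul_nonneg (mul_nonneg (sqrt_nonneg 3) hA) hv,
    mul_nonneg hB (by linarith : 0 ≤ A - 6 * B)]

lemma exists_sq_ge_of_nonneg {A u v : ℝ} (hA : 0 ≤ A) (hv : 0 ≤ v) :
    ∃ φ, (1 - √6 / 9) * (A ^ 2 + u ^ 2 + v ^ 2)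
      ≤ (A * cos φ + u * cos (3 * φ) + v * sin (3 * φ)) ^ 2 := by
  rcases le_or_gt ((3 / 4 - √6 / 9) * A) √(u ^ 2 + v ^ 2) with hR | hR
  · exact exists_sq_ge_of_le_sqrt hA hR
  have h6 := sqrt_six_gt
  have hsmall : 4 * (u ^ 2 + v ^ 2) ≤ A ^ 2 := by
    have huv := (sqrt_lt' ((sqrt_nonneg _).trans_lt hR)).1 hR
    have hc : (3 / 4 - √6 / 9) ^ 2 ≤ 1 / 4 := by
      nlinarith [sq_sqrt (show (0 : ℝ) ≤ 6 by norm_num)]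
    nlinarith [mul_le_mul_of_nonneg_right hc (sq_nonneg A)]
  have hvA : 2 * v ≤ A := by nlinarith
  rcases le_or_gt 0 u with hu | hu
  · exact ⟨0, by simpa using sq_ge_at_zero hu hv hvA⟩
  obtain ⟨B, hB, rfl⟩ : ∃ B, 0 < B ∧ u = -B := ⟨-u, by linarith, by ring⟩
  rcases le_or_gt (6 * B) A with hBA | hAB
  · refine ⟨π / 6, ?_⟩
    rw [show 3 * (π / 6) = π / 2 by ring, cos_pi_div_six, cos_pi_div_two, sin_pi_div_two]
    simpa [mul_comm] using sq_ge_at_pi_div_six hB.le hv hBA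
  · simpa [sub_eq_add_neg] using
      exists_sq_ge_at_critical_point hB hv hAB.le (by nlinarith) hvA

lemma exists_sq_ge {A u v : ℝ} (hA : 0 ≤ A) :
    ∃ φ, (1 - √6 / 9) * (A ^ 2 + u ^ 2 + v ^ 2)
      ≤ (A * cos φ + u * cos (3 * φ) + v * sin (3 * φ)) ^ 2 := by
  rcases le_or_gt 0 v with hv | hv
  · exact exists_sq_ge_of_nonneg hA hv
  obtain ⟨φ, hφ⟩ := exists_sq_ge_of_nonneg (u := u) hA (neg_nonneg.2 hv.le)
  refine ⟨-φ, ?_⟩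
  rw [cos_neg, mul_neg, cos_neg, sin_neg]
  simpa using hφ

lemma exists_harmonic_sq_ge (p q r s : ℝ) :
    ∃ θ, (1 - √6 / 9) * (p ^ 2 + q ^ 2 + r ^ 2 + s ^ 2)
      ≤ (p * cos θ + q * sin θ + r * cos (3 * θ) + s * sin (3 * θ)) ^ 2 := by
  obtain ⟨α, -, hp, hq⟩ := exists_polar p q
  obtain ⟨φ, hφ⟩ := exists_sq_ge (sqrt_nonneg (p ^ 2 + q ^ 2))
    (u := r * cos (3 * α) + s * sin (3 * α)) (v := s * cos (3 * α) - r * sin (3 * α))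
  generalize √(p ^ 2 + q ^ 2) = A at hp hq hφ
  subst hp hq
  refine ⟨α + φ, le_of_eq_of_le ?_ (hφ.trans_eq ?_)⟩
  · linear_combination (1 - √6 / 9) * A ^ 2 * sin_sq_add_cos_sq α
      - (1 - √6 / 9) * (r ^ 2 + s ^ 2) * sin_sq_add_cos_sq (3 * α)
  · congr 1
    rw [mul_add, cos_add, sin_add, cos_add, sin_add]
    linear_combination -A * cos φ * sin_sq_add_cos_sq α

lemma exists_cubicForm_sq_ge (a b c d : ℝ) :
    ∃ x y : ℝ, x ^ 2 + y ^ 2 = 1 ∧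
      (2 - 2 * √6 / 9) * cubicMeanSq a b c d ≤ cubicForm a b c d x y ^ 2 := by
  obtain ⟨θ, hθ⟩ :=
    exists_harmonic_sq_ge ((3 * a + c) / 4) ((b + 3 * d) / 4) ((a - c) / 4) ((b - d) / 4)
  refine ⟨cos θ, sin θ, cos_sq_add_sin_sq θ, ?_⟩
  rw [cubicForm_eq_harmonics a b c d (cos_sq_add_sin_sq θ), cubicMeanSq_eq_harmonics,
    ← cos_three_mul, ← sin_three_mul]
  linarith

-- A sum-of-squares certificate; its double zero at `y = √5 x` is where the maximum is attained.
lemma cubicForm_minimizer_sq_le {x y : ℝ} (h : x ^ 2 + y ^ 2 = 1) :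
    cubicForm (3 * √6 - 2) 0 (12 - 3 * √6) (2 * √5) x y ^ 2
      ≤ (2 - 2 * √6 / 9) * cubicMeanSq (3 * √6 - 2) 0 (12 - 3 * √6) (2 * √5) := by
  have h5 : √5 ^ 2 = 5 := sq_sqrt (by norm_num)
  have h6 : √6 ^ 2 = 6 := sq_sqrt (by norm_num)
  have hval : (2 - 2 * √6 / 9) * cubicMeanSq (3 * √6 - 2) 0 (12 - 3 * √6) (2 * √5)
      = 58 - 12 * √6 := by
    unfold cubicMeanSq
    linear_combination (5 / 4 * (2 - 2 * √6 / 9)) * h5 + (9 / 4 * (2 - 2 * √6 / 9) + 2 / 3) * h6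
  have hsos : 841 * ((58 - 12 * √6) * (x ^ 2 + y ^ 2) ^ 3
        - cubicForm (3 * √6 - 2) 0 (12 - 3 * √6) (2 * √5) x y ^ 2)
      = (38 - 12 * √6) * ((y * (y - √5 * x) * (29 * y - (3 * √6 - 5) * √5 * x)) ^ 2
        + (736 - 24 * √6) * (x * y * (y - √5 * x)) ^ 2) := by
    unfold cubicForm
    linear_combination (-2088 * x * y ^ 5 * √5 - 7857 * x ^ 2 * y ^ 4
      + 3474 * x ^ 2 * y ^ 4 * √5 ^ 2 + 108 * x ^ 2 * y ^ 4 * √5 ^ 2 * √6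
      + 576 * x ^ 3 * y ^ 3 * √5 - 684 * x ^ 3 * y ^ 3 * √5 ^ 3
      - 216 * x ^ 3 * y ^ 3 * √5 ^ 3 * √6 + 15138 * x ^ 4 * y ^ 2
      - 288 * x ^ 4 * y ^ 2 * √5 ^ 2 - 702 * x ^ 4 * y ^ 2 * √5 ^ 4
      + 108 * x ^ 4 * y ^ 2 * √5 ^ 4 * √6 - 7569 * x ^ 6) * h6
      + (-3364 * y ^ 6 + 9976 * x ^ 2 * y ^ 4 - 8004 * x ^ 2 * y ^ 4 * √6
      - 13224 * x ^ 3 * y ^ 3 * √5 + 5916 * x ^ 3 * y ^ 3 * √5 * √6 - 55506 * x ^ 4 * y ^ 2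
      + 20184 * x ^ 4 * y ^ 2 * √6 - 5162 * x ^ 4 * y ^ 2 * √5 ^ 2
      + 2088 * x ^ 4 * y ^ 2 * √5 ^ 2 * √6) * h5
  have h6u : √6 < 38 / 12 := by nlinarith [sqrt_nonneg 6]
  have hpos : 0 ≤ (38 - 12 * √6) * ((y * (y - √5 * x) * (29 * y - (3 * √6 - 5) * √5 * x)) ^ 2
      + (736 - 24 * √6) * (x * y * (y - √5 * x)) ^ 2) := by
    apply mul_nonneg (by linarith)
    exact add_nonneg (sq_nonneg _) (mul_nonneg (by linarith) (sq_nonneg _))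
  rw [h, one_pow, mul_one] at hsos
  linarith

lemma sSup_cubicForm_sq_le {a b c d B : ℝ}
    (h : ∀ x y : ℝ, x ^ 2 + y ^ 2 = 1 → cubicForm a b c d x y ^ 2 ≤ B) :
    sSup {v : ℝ | ∃ x y : ℝ, x ^ 2 + y ^ 2 = 1 ∧ v = cubicForm a b c d x y ^ 2} ≤ B :=
  Real.sSup_le (by rintro _ ⟨x, y, hxy, rfl⟩; exact h x y hxy)
    ((sq_nonneg _).trans (h 1 0 (by norm_num)))

lemma le_sSup_cubicForm_sq {a b c d B : ℝ}
    (h : ∃ x y : ℝ, x ^ 2 + y ^ 2 = 1 ∧ B ≤ cubicForm a b c d x y ^ 2) :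
    B ≤ sSup {v : ℝ | ∃ x y : ℝ, x ^ 2 + y ^ 2 = 1 ∧ v = cubicForm a b c d x y ^ 2} := by
  obtain ⟨x, y, hxy, hB⟩ := h
  refine le_csSup_of_le ⟨4 * cubicMeanSq a b c d, ?_⟩ ⟨x, y, hxy, rfl⟩ hB
  rintro _ ⟨x, y, hxy, rfl⟩
  exact cubicForm_sq_le a b c d hxy

/-- for cubic forms `F = ax³ + bx²y + cxy² + dy³`, the maximum
`M(F)` of `F²` on the unit circle and its mean value `I(F)` satisfy
`(2 − 2√6/9)·I(F) ≤ M(F) ≤ 4·I(F)`, with both constants attained — by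
`F = x³ − xy²` and `F = (3√6−2)x³ + (12−3√6)xy² + 2√5y³` respectively
(`Υ(2,4) = 4`, `Ξ(2,4) = 2 − 2√6/9`). -/
theorem stmt_18
    (M I : ℝ → ℝ → ℝ → ℝ → ℝ)
    (hM : ∀ a b c d : ℝ, M a b c d =
      sSup {v : ℝ | ∃ x y : ℝ, x ^ 2 + y ^ 2 = 1 ∧
        v = (a * x ^ 3 + b * x ^ 2 * y + c * x * y ^ 2 + d * y ^ 3) ^ 2})
    (hI : ∀ a b c d : ℝ, I a b c d =
      (1 / (2 * Real.pi)) * ∫ θ in (0 : ℝ)..(2 * Real.pi),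
        (a * Real.cos θ ^ 3 + b * Real.cos θ ^ 2 * Real.sin θ
          + c * Real.cos θ * Real.sin θ ^ 2 + d * Real.sin θ ^ 3) ^ 2) :
    (∀ a b c d : ℝ,
      (2 - 2 * Real.sqrt 6 / 9) * I a b c d ≤ M a b c d ∧
        M a b c d ≤ 4 * I a b c d) ∧
    M 1 0 (-1) 0 = 4 * I 1 0 (-1) 0 ∧
    M (3 * Real.sqrt 6 - 2) 0 (12 - 3 * Real.sqrt 6) (2 * Real.sqrt 5)
      = (2 - 2 * Real.sqrt 6 / 9)
        * I (3 * Real.sqrt 6 - 2) 0 (12 - 3 * Real.sqrt 6) (2 * Real.sqrt 5) := by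
  have hM' : ∀ a b c d, M a b c d
      = sSup {v : ℝ | ∃ x y : ℝ, x ^ 2 + y ^ 2 = 1 ∧ v = cubicForm a b c d x y ^ 2} := hM
  have hI' : ∀ a b c d, I a b c d = cubicMeanSq a b c d := by
    intro a b c d
    have h := integral_cubicForm_cos_sin_sq a b c d
    unfold cubicForm at h
    rw [hI, h]
    field_simp
  have lower : ∀ a b c d, (2 - 2 * √6 / 9) * I a b c d ≤ M a b c d := by
    intro a b c d
    rw [hM', hI']
    exact le_sSup_cubicForm_sq (exists_cubicForm_sq_ge a b c d)
  refine ⟨fun a b c d => ⟨lower a b c d, ?_⟩, ?_, le_antisymm ?_ (lower _ _ _ _)⟩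
  · rw [hM', hI']
    exact sSup_cubicForm_sq_le fun x y h => cubicForm_sq_le a b c d h
  · rw [hM', hI']
    exact le_antisymm (sSup_cubicForm_sq_le fun x y h => cubicForm_sq_le _ _ _ _ h)
      (le_sSup_cubicForm_sq ⟨1, 0, by norm_num, by norm_num [cubicForm, cubicMeanSq]⟩)
  · rw [hM', hI']
    exact sSup_cubicForm_sq_le fun x y h => cubicForm_minimizer_sq_le h
end

section
/- Let y, z ∈ ℝ with (y,z) ≠ (0,0), and set x = y + z, R = √(x² + y² + z²) and τ = tanh(R/(2√2)) ∈ (0,1). Define the complex numbers N(x) = (√3·x + i(y − z))³ − 2√2·i·R³·τ and D(x) = 2√2·R³ + i·(√3·x + i(y − z))³·τ, and put J = N(x)/D(x) and J⁻ = N(−x)/D(−x) (same y, z, R, τ, with x replaced by −x). Then: D(x) ≠ 0 and D(−x) ≠ 0; |J| = 1; and J⁻ · J = −1. -/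
/-!
Write `w = √3·x + i(y − z)` and `u = w³`. Since `x = y + z`, `|w|² = 2R²`, so `|u| = A := 2√2·R³`
and `N(x) = u − iAτ`, `D(x) = A + iτu`. For `|u| = A` one has `A·D(x) = u·conj N(x)`, whence
`|N(x)| = |D(x)|`, while `|D(x)| ≥ A(1 − τ) > 0`. Replacing `x` by `−x` turns `w` into
`−conj w`, so `N(−x) = −conj N(x)` and `D(−x) = conj D(x)`, and `J⁻·J = −|J|² = −1`.
-/

open Complex ComplexConjugate

theorem Real.tanh_pos {x : ℝ} (hx : 0 < x) : 0 < Real.tanh x := by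
  rw [Real.tanh_eq_sinh_div_cosh]
  exact div_pos (Real.sinh_pos_iff.mpr hx) (Real.cosh_pos x)

lemma norm_sq_sqrt_three_mul_add_I_mul (y z : ℝ) :
    ‖((√3 * (y + z) : ℝ) : ℂ) + I * ((y - z : ℝ) : ℂ)‖ ^ 2 = 2 * ((y + z) ^ 2 + y ^ 2 + z ^ 2) := by
  rw [Complex.sq_norm, mul_comm I, normSq_add_mul_I, mul_pow, Real.sq_sqrt (by norm_num)]
  ring

lemma norm_pow_three_of_sq_norm_eq {w : ℂ} {R : ℝ} (hR : 0 ≤ R) (hw : ‖w‖ ^ 2 = 2 * R ^ 2) :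
    ‖w ^ 3‖ = 2 * √2 * R ^ 3 := by
  have hnorm : ‖w‖ = √2 * R := by
    rw [← Real.sqrt_sq (norm_nonneg w), hw, Real.sqrt_mul (by norm_num), Real.sqrt_sq hR]
  have hsqrt2 : √2 ^ 2 = 2 := Real.sq_sqrt (by norm_num)
  rw [norm_pow, hnorm]
  linear_combination √2 * R ^ 3 * hsqrt2

lemma neg_ofReal_add_I_mul (a b : ℝ) :
    ((-a : ℝ) : ℂ) + I * (b : ℂ) = -conj ((a : ℂ) + I * (b : ℂ)) := by
  simp only [map_add, map_mul, conj_ofReal, conj_I, ofReal_neg]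
  ring

section MobiusOnCircle

variable {u : ℂ} {A : ℝ} (τ : ℝ)

lemma ofReal_mul_add_I_mul_mul_eq (hu : ‖u‖ = A) :
    (A : ℂ) * (A + I * u * τ) = u * conj (u - (A * τ : ℝ) * I) := by
  have hconj : u * conj u = (A : ℂ) ^ 2 := by rw [mul_conj', hu]
  simp only [map_sub, map_mul, conj_ofReal, conj_I, ofReal_mul]
  linear_combination -hconj

lemma norm_sub_mul_I_eq_norm_add_I_mul (hu : ‖u‖ = A) :
    ‖u - (A * τ : ℝ) * I‖ = ‖(A : ℂ) + I * u * τ‖ := by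
  rcases (hu ▸ norm_nonneg u : 0 ≤ A).eq_or_lt with hA | hA
  · subst hA
    simp [norm_eq_zero.mp hu]
  · have h := congrArg norm (ofReal_mul_add_I_mul_mul_eq τ hu)
    rw [norm_mul, norm_mul, norm_conj, hu, norm_real, Real.norm_of_nonneg hA.le] at h
    exact (mul_left_cancel₀ hA.ne' h).symm

lemma ofReal_add_I_mul_mul_ne_zero (hu : ‖u‖ = A) (hA : 0 < A) (hτ : |τ| < 1) :
    (A : ℂ) + I * u * τ ≠ 0 := by
  have hlt : ‖I * u * (τ : ℂ)‖ < ‖(A : ℂ)‖ := by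
    simp only [norm_mul, norm_I, one_mul, hu, norm_real, Real.norm_of_nonneg hA.le,
      Real.norm_eq_abs]
    exact mul_lt_of_lt_one_right hA hτ
  intro h
  rw [add_eq_zero_iff_eq_neg.mp h, norm_neg] at hlt
  exact lt_irrefl _ hlt

end MobiusOnCircle

lemma neg_conj_mul_self_of_norm_eq_one {J : ℂ} (hJ : ‖J‖ = 1) : -conj J * J = -1 := by
  rw [neg_mul, conj_mul', hJ]
  norm_num

/-- with `x = y + z`, `R = √(x²+y²+z²)`, `τ = tanh(R/(2√2))`,
`N(s) = (√3·s + i(y−z))³ − 2√2·i·R³·τ` and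
`D(s) = 2√2·R³ + i·(√3·s + i(y−z))³·τ`: the denominators are nonzero,
`τ ∈ (0,1)`, `|J| = 1` for `J = N(x)/D(x)`, and `J(−x)·J(x) = −1`. -/
theorem stmt_19 (y z : ℝ) (hyz : (y, z) ≠ (0, 0))
    (x R τ : ℝ) (hx : x = y + z)
    (hR : R = Real.sqrt (x ^ 2 + y ^ 2 + z ^ 2))
    (hτ : τ = Real.tanh (R / (2 * Real.sqrt 2)))
    (N D : ℝ → ℂ)
    (hN : ∀ s : ℝ, N s =
      ((Real.sqrt 3 * s : ℝ) + Complex.I * ((y - z : ℝ))) ^ 3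
        - ((2 * Real.sqrt 2 * R ^ 3 * τ : ℝ)) * Complex.I)
    (hD : ∀ s : ℝ, D s =
      ((2 * Real.sqrt 2 * R ^ 3 : ℝ)) +
        Complex.I * ((Real.sqrt 3 * s : ℝ) + Complex.I * ((y - z : ℝ))) ^ 3 * (τ : ℝ)) :
    0 < τ ∧ τ < 1 ∧ D x ≠ 0 ∧ D (-x) ≠ 0 ∧
      ‖N x / D x‖ = 1 ∧
      (N (-x) / D (-x)) * (N x / D x) = -1 := by
  set w : ℂ := ((√3 * x : ℝ) : ℂ) + I * ((y - z : ℝ) : ℂ)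
  set A : ℝ := 2 * √2 * R ^ 3
  have hRpos : 0 < R := by
    have hyz' : y ≠ 0 ∨ z ≠ 0 := by contrapose! hyz; simp [hyz]
    rw [hR]
    apply Real.sqrt_pos.mpr
    rcases hyz' with h | h <;> positivity
  have hA : 0 < A := by positivity
  have hτpos : 0 < τ := hτ ▸ Real.tanh_pos (by positivity)
  have hτlt : τ < 1 := hτ ▸ Real.tanh_lt_one _
  have hu : ‖w ^ 3‖ = A := by
    refine norm_pow_three_of_sq_norm_eq hRpos.le ?_
    rw [hR, Real.sq_sqrt (by positivity)]
    simp only [w, hx]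
    exact norm_sq_sqrt_three_mul_add_I_mul y z
  have hNx : N x = w ^ 3 - (A * τ : ℝ) * I := hN x
  have hDx : D x = A + I * w ^ 3 * τ := hD x
  have hw_neg : ((√3 * -x : ℝ) : ℂ) + I * ((y - z : ℝ) : ℂ) = -conj w := by
    rw [mul_neg]; exact neg_ofReal_add_I_mul _ _
  have hNnx : N (-x) = -conj (N x) := by
    rw [hN, hw_neg, hNx]; simp only [map_sub, map_mul, map_pow, conj_ofReal, conj_I]; ring
  have hDnx : D (-x) = conj (D x) := by
    rw [hD, hw_neg, hDx]; simp only [map_add, map_mul, map_pow, conj_ofReal, conj_I]; ring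
  have hDne : D x ≠ 0 :=
    hDx ▸ ofReal_add_I_mul_mul_ne_zero τ hu hA (abs_lt.mpr ⟨by linarith, hτlt⟩)
  have hJ : ‖N x / D x‖ = 1 := by
    rw [norm_div, hNx, hDx, norm_sub_mul_I_eq_norm_add_I_mul τ hu,
      div_self (norm_ne_zero_iff.mpr (hDx ▸ hDne))]
  refine ⟨hτpos, hτlt, hDne, hDnx ▸ (map_ne_zero _).mpr hDne, hJ, ?_⟩
  rw [hNnx, hDnx, neg_div, ← map_div₀, neg_conj_mul_self_of_norm_eq_one hJ]
end
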